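/- arXiv:2503.09115 — 5 statements merged into one kernel-verified Lean document; each statement's English description precedes it below -/
import Mathlib

section
/- For every integer t ≥ 1 and every t×t permutation matrix P there is a constant C_P > 0 such that every n×n 0-1 matrix that avoids P has at most C_P · n entries equal to 1. -/
/-- A 0-1 matrix `M` contains a 0-1 matrix `P` if one can select rows and columns of `M`,
in increasing order, such that `M` has a 1 wherever `P` does; otherwise `M` avoids `P`. -/
def ContainsPat {k l m n : ℕ} (M : Fin m → Fin n → Bool) (P : Fin k → Fin l → Bool) : Prop :=
  ∃ (r : Fin k → Fin m) (c : Fin l → Fin n), StrictMono r ∧ StrictMono c ∧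
    ∀ a b, P a b = true → M (r a) (c b) = true

/-- A permutation matrix: a square 0-1 matrix with exactly one 1-entry in each row and
each column. -/
def IsPermMatrix {t : ℕ} (P : Fin t → Fin t → Bool) : Prop :=
  (∀ i, ∃! j, P i j = true) ∧ (∀ j, ∃! i, P i j = true)

/-- The number of 1-entries of a 0-1 matrix. -/
def onesCount {m n : ℕ} (M : Fin m → Fin n → Bool) : ℕ :=
  (Finset.univ.filter fun p : Fin m × Fin n => M p.1 p.2 = true).card

namespace MT

/-- From a permutation matrix extract the bijection. -/
lemma perm_fun {t : ℕ} {P : Fin t → Fin t → Bool} (hP : IsPermMatrix P) :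
    ∃ σ : Fin t → Fin t, Function.Bijective σ ∧ ∀ a b, P a b = true ↔ b = σ a := by
  choose σ h1 h2 using hP.1
  refine ⟨σ, ?_, fun a b => ?_⟩
  · rw [← Finite.injective_iff_bijective]
    intro a a' h
    obtain ⟨i, -, hu⟩ := hP.2 (σ a)
    exact (hu a (h1 a)).trans (hu a' (h ▸ h1 a')).symm
  · exact ⟨fun h => (h2 a b h).symm ▸ rfl, fun h => h ▸ h1 a⟩

variable {s m : ℕ}

/-- global index from block index and local index -/
def emb (i : Fin m) (x : Fin s) : Fin (s * m) :=
  ⟨s * i.val + x.val, by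
    calc s * i.val + x.val < s * i.val + s := by omega
    _ = s * (i.val + 1) := by ring
    _ ≤ s * m := Nat.mul_le_mul_left s i.isLt⟩

lemma emb_div (i : Fin m) (x : Fin s) : (emb i x).val / s = i.val := by
  simp [emb, Nat.mul_add_div x.pos, Nat.div_eq_of_lt x.isLt]

lemma emb_mod (i : Fin m) (x : Fin s) : (emb i x).val % s = x.val := by
  simp [emb, Nat.mul_add_mod, Nat.mod_eq_of_lt x.isLt]

lemma lt_of_div_lt {a b : Fin (s * m)} (h : a.val / s < b.val / s) : a < b := by
  by_contra hc
  exact absurd (Nat.div_le_div_right (c := s) (Fin.le_def.mp (not_lt.mp hc))) (by omega)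

lemma emb_strictMono (i : Fin m) : StrictMono (emb (s := s) i) := by
  intro x y h
  simp only [emb, Fin.mk_lt_mk, Fin.lt_def]
  omega

lemma emb_lt_emb {i i' : Fin m} (x x' : Fin s) (h : i < i') :
    emb i x < emb i' x' := by
  apply lt_of_div_lt
  rw [emb_div, emb_div]
  exact h


variable (M : Fin (s * m) → Fin (s * m) → Bool)

/-- local columns occupied in block (i,j) -/
def colSet (i j : Fin m) : Finset (Fin s) :=
  Finset.univ.filter fun x => ∃ r : Fin (s * m), r.val / s = i.val ∧ M r (emb j x) = true

/-- local rows occupied in block (i,j) -/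
def rowSet (i j : Fin m) : Finset (Fin s) :=
  Finset.univ.filter fun y => ∃ c : Fin (s * m), c.val / s = j.val ∧ M (emb i y) c = true

/-- the contracted m×m matrix of nonempty blocks -/
def blockB : Fin m → Fin m → Bool := fun i j =>
  decide (∃ r c : Fin (s * m), r.val / s = i.val ∧ c.val / s = j.val ∧ M r c = true)

/-- number of ones inside block (i,j) -/
def blockOnes (i j : Fin m) : ℕ :=
  (Finset.univ.filter fun q : Fin s × Fin s => M (emb i q.1) (emb j q.2) = true).card

lemma contains_swap {k l p q : ℕ} {M : Fin p → Fin q → Bool} {P : Fin k → Fin l → Bool}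
    (h : ContainsPat M P) :
    ContainsPat (fun i j => M j i) (fun a b => P b a) := by
  obtain ⟨r, c, hr, hc, h⟩ := h
  exact ⟨c, r, hc, hr, fun a b hab => h b a hab⟩

lemma isPerm_swap {t : ℕ} {P : Fin t → Fin t → Bool} (h : IsPermMatrix P) :
    IsPermMatrix (fun a b => P b a) := ⟨h.2, h.1⟩

lemma rowSet_eq_colSet_swap (i j : Fin m) :
    rowSet M i j = colSet (fun a b => M b a) j i := rfl

/-- Contraction: if M avoids the permutation matrix P, so does the block matrix. -/
lemma blockB_avoids {t : ℕ} {P : Fin t → Fin t → Bool} (hP : IsPermMatrix P)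
    (hM : ¬ ContainsPat M P) : ¬ ContainsPat (blockB M) P := by
  intro ⟨r, c, hr, hc, h⟩
  obtain ⟨σ, hσbij, hσ⟩ := perm_fun hP
  have hblk : ∀ a : Fin t, ∃ x y : Fin (s * m),
      x.val / s = (r a).val ∧ y.val / s = (c (σ a)).val ∧ M x y = true := by
    intro a
    have := h a (σ a) ((hσ a (σ a)).mpr rfl)
    simpa [blockB] using this
  choose x y hx hy hxy using hblk
  obtain ⟨τ, hτ⟩ := hσbij.surjective.hasRightInverse
  apply hM
  refine ⟨x, fun b => y (τ b), ?_, ?_, ?_⟩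
  · intro a a' haa'
    exact lt_of_div_lt (by rw [hx, hx]; exact hr haa')
  · intro b b' hbb'
    apply lt_of_div_lt
    rw [hy, hy, hτ, hτ]
    exact hc hbb'
  · intro a b hab
    have hb : b = σ a := (hσ a b).mp hab
    subst hb
    have ht2 : τ (σ a) = a := hσbij.injective (hτ (σ a))
    show M (x a) (y (τ (σ a))) = true
    rw [ht2]
    exact hxy a


/-- In each block-column, fewer than t·C(s,t) blocks are "wide". -/
lemma wide_count {t : ℕ} {P : Fin t → Fin t → Bool} (ht : 1 ≤ t) (hP : IsPermMatrix P)
    (hM : ¬ ContainsPat M P) (j : Fin m) :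
    (Finset.univ.filter fun i : Fin m => t ≤ (colSet M i j).card).card
      ≤ (t - 1) * Nat.choose s t := by
  by_contra hlt
  push_neg at hlt
  set W := Finset.univ.filter fun i : Fin m => t ≤ (colSet M i j).card with hW
  -- assign to each wide block a t-subset of its occupied columns
  have hchoice : ∀ i : Fin m, i ∈ W → ∃ S : Finset (Fin s), S ⊆ colSet M i j ∧ S.card = t := by
    intro i hi
    rw [hW, Finset.mem_filter] at hi
    exact Finset.exists_subset_card_eq hi.2
  classical
  set f : Fin m → Finset (Fin s) := fun i =>
    if h : i ∈ W then (hchoice i h).choose else ∅ with hf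
  have hfsub : ∀ i ∈ W, f i ⊆ colSet M i j := by
    intro i hi; rw [hf]; simp only [dif_pos hi]; exact (hchoice i hi).choose_spec.1
  have hfcard : ∀ i ∈ W, (f i).card = t := by
    intro i hi; rw [hf]; simp only [dif_pos hi]; exact (hchoice i hi).choose_spec.2
  have hmaps : ∀ i ∈ W, f i ∈ Finset.powersetCard t (Finset.univ : Finset (Fin s)) := by
    intro i hi
    rw [Finset.mem_powersetCard]
    exact ⟨Finset.subset_univ _, hfcard i hi⟩
  have hcard : (Finset.powersetCard t (Finset.univ : Finset (Fin s))).card * (t - 1) < W.card := by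
    rwa [Finset.card_powersetCard, Finset.card_univ, Fintype.card_fin, mul_comm]
  obtain ⟨S₀, hS₀mem, hS₀⟩ :=
    Finset.exists_lt_card_fiber_of_mul_lt_card_of_maps_to hmaps hcard
  set F := W.filter fun i => f i = S₀ with hF
  have hFcard : t ≤ F.card := by omega
  obtain ⟨F', hF'sub, hF'card⟩ := Finset.exists_subset_card_eq hFcard
  have hS₀card : S₀.card = t := (Finset.mem_powersetCard.mp hS₀mem).2
  set iRows := F'.orderIsoOfFin hF'card with hiRows
  set cols := S₀.orderIsoOfFin hS₀card with hcols
  obtain ⟨σ, hσbij, hσ⟩ := perm_fun hP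
  -- each chosen block contains a 1 in every column of S₀
  have hrow : ∀ a : Fin t, ∃ rr : Fin (s * m),
      rr.val / s = ((iRows a : Fin m)).val ∧ M rr (emb j (cols (σ a))) = true := by
    intro a
    have hmem : (iRows a : Fin m) ∈ F := hF'sub (iRows a).2
    rw [hF, Finset.mem_filter] at hmem
    have hcol : (cols (σ a) : Fin s) ∈ colSet M (iRows a : Fin m) j := by
      apply hfsub _ hmem.1
      rw [hmem.2]
      exact (cols (σ a)).2
    rw [colSet, Finset.mem_filter] at hcol
    exact hcol.2
  choose rr hrr hMrr using hrow
  apply hM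
  refine ⟨rr, fun b => emb j (cols b), ?_, ?_, ?_⟩
  · intro a a' haa'
    apply lt_of_div_lt
    rw [hrr, hrr]
    exact iRows.strictMono haa'
  · intro b b' hbb'
    exact emb_strictMono j (cols.strictMono hbb')
  · intro a b hab
    have hb : b = σ a := (hσ a b).mp hab
    subst hb
    exact hMrr a


def quo (hs : 0 < s) (r : Fin (s * m)) : Fin m :=
  ⟨r.val / s, by rw [Nat.div_lt_iff_lt_mul hs, mul_comm m s]; exact r.isLt⟩

def rem (hs : 0 < s) (r : Fin (s * m)) : Fin s := ⟨r.val % s, Nat.mod_lt _ hs⟩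

lemma emb_quo_rem (hs : 0 < s) (r : Fin (s * m)) : emb (quo hs r) (rem hs r) = r :=
  Fin.ext (Nat.div_add_mod r.val s)

lemma onesCount_eq_sum (hs : 0 < s) :
    onesCount M = ∑ p : Fin m × Fin m, blockOnes M p.1 p.2 := by
  classical
  rw [onesCount, Finset.card_eq_sum_card_fiberwise
    (f := fun q : Fin (s * m) × Fin (s * m) => (quo hs q.1, quo hs q.2))
    (t := Finset.univ) (fun _ _ => Finset.mem_univ _)]
  apply Finset.sum_congr rfl
  intro p _
  rw [blockOnes]
  apply Finset.card_bij' (i := fun q _ => ((rem hs q.1, rem hs q.2) : Fin s × Fin s))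
    (j := fun q _ => ((emb p.1 q.1, emb p.2 q.2) : Fin (s * m) × Fin (s * m)))
  · intro q hq
    simp only [Finset.mem_filter, Finset.mem_univ, true_and] at hq ⊢
    obtain ⟨h1, h2⟩ := hq
    have e1 : emb p.1 (rem hs q.1) = q.1 := by rw [← (Prod.ext_iff.mp h2).1]; exact emb_quo_rem hs q.1
    have e2 : emb p.2 (rem hs q.2) = q.2 := by rw [← (Prod.ext_iff.mp h2).2]; exact emb_quo_rem hs q.2
    rw [e1, e2]; exact h1
  · intro q hq
    simp only [Finset.mem_filter, Finset.mem_univ, true_and] at hq ⊢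
    refine ⟨hq, ?_⟩
    ext <;> simp [quo, emb_div]
  · intro q hq
    simp only [Finset.mem_filter, Finset.mem_univ, true_and] at hq
    have e1 : (quo hs q.1 : Fin m) = p.1 := (Prod.ext_iff.mp hq.2).1
    have e2 : (quo hs q.2 : Fin m) = p.2 := (Prod.ext_iff.mp hq.2).2
    rw [← e1, ← e2]
    ext
    · exact congrArg Fin.val (emb_quo_rem hs q.1)
    · exact congrArg Fin.val (emb_quo_rem hs q.2)
  · intro q hq
    ext <;> simp [rem, emb_mod]

lemma blockOnes_le_mul (i j : Fin m) :
    blockOnes M i j ≤ (rowSet M i j).card * (colSet M i j).card := by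
  rw [blockOnes, ← Finset.card_product]
  apply Finset.card_le_card
  intro q hq
  simp only [Finset.mem_filter, Finset.mem_univ, true_and] at hq
  rw [Finset.mem_product, rowSet, colSet]
  constructor
  · simp only [Finset.mem_filter, Finset.mem_univ, true_and]
    exact ⟨emb j q.2, emb_div j q.2, hq⟩
  · simp only [Finset.mem_filter, Finset.mem_univ, true_and]
    exact ⟨emb i q.1, emb_div i q.1, hq⟩

lemma blockOnes_le_sq (i j : Fin m) : blockOnes M i j ≤ s * s := by
  calc blockOnes M i j ≤ (Finset.univ : Finset (Fin s × Fin s)).card :=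
        Finset.card_le_card (Finset.filter_subset _ _)
  _ = s * s := by simp

lemma blockOnes_eq_zero {i j : Fin m} (h : blockB M i j = false) : blockOnes M i j = 0 := by
  rw [blockOnes, Finset.card_eq_zero, Finset.filter_eq_empty_iff]
  intro q _
  intro hq
  have : blockB M i j = true := by
    rw [blockB, decide_eq_true_iff]
    exact ⟨emb i q.1, emb j q.2, emb_div i q.1, emb_div j q.2, hq⟩
  rw [h] at this
  exact Bool.false_ne_true this


lemma wide_total {t : ℕ} {P : Fin t → Fin t → Bool} (ht : 1 ≤ t) (hP : IsPermMatrix P)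
    (hM : ¬ ContainsPat M P) :
    (Finset.univ.filter fun p : Fin m × Fin m => t ≤ (colSet M p.1 p.2).card).card
      ≤ m * ((t - 1) * Nat.choose s t) := by
  classical
  rw [Finset.card_eq_sum_card_fiberwise (f := Prod.snd) (t := Finset.univ)
    (fun _ _ => Finset.mem_univ _)]
  calc ∑ j : Fin m, ((Finset.univ.filter fun p : Fin m × Fin m =>
          t ≤ (colSet M p.1 p.2).card).filter fun p => p.2 = j).card
      ≤ ∑ _j : Fin m, (t - 1) * Nat.choose s t := by
        apply Finset.sum_le_sum
        intro j _
        calc ((Finset.univ.filter fun p : Fin m × Fin m =>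
                t ≤ (colSet M p.1 p.2).card).filter fun p => p.2 = j).card
            ≤ (Finset.univ.filter fun i : Fin m => t ≤ (colSet M i j).card).card := by
              apply Finset.card_le_card_of_injOn (fun p => p.1)
              · intro p hp
                simp only [Finset.mem_coe, Finset.mem_filter, Finset.mem_univ, true_and] at hp ⊢
                rw [← hp.2]; exact hp.1
              · intro p hp p' hp' h
                simp only [Finset.coe_filter, Set.mem_setOf_eq] at hp hp'
                exact Prod.ext h (hp.2.trans hp'.2.symm)
        _ ≤ (t - 1) * Nat.choose s t := wide_count M ht hP hM j
  _ = m * ((t - 1) * Nat.choose s t) := by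
        rw [Finset.sum_const, Finset.card_univ, Fintype.card_fin, smul_eq_mul]

lemma tall_total {t : ℕ} {P : Fin t → Fin t → Bool} (ht : 1 ≤ t) (hP : IsPermMatrix P)
    (hM : ¬ ContainsPat M P) :
    (Finset.univ.filter fun p : Fin m × Fin m => t ≤ (rowSet M p.1 p.2).card).card
      ≤ m * ((t - 1) * Nat.choose s t) := by
  classical
  have hM' : ¬ ContainsPat (fun a b => M b a) (fun a b => P b a) := by
    intro hc
    exact hM (contains_swap hc)
  have hw := wide_total (fun a b => M b a) ht (isPerm_swap hP) hM'
  refine le_trans (le_of_eq ?_) hw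
  apply Finset.card_bij' (i := fun p _ => Prod.swap p) (j := fun p _ => Prod.swap p)
  · intro p hp
    simp only [Finset.mem_filter, Finset.mem_univ, true_and] at hp ⊢
    exact hp
  · intro p hp
    simp only [Finset.mem_filter, Finset.mem_univ, true_and] at hp ⊢
    exact hp
  · intro p _; exact Prod.swap_swap p
  · intro p _; exact Prod.swap_swap p

lemma aggregate {t : ℕ} {P : Fin t → Fin t → Bool} (hs : 0 < s) (ht : 1 ≤ t)
    (hP : IsPermMatrix P) (hM : ¬ ContainsPat M P) :
    onesCount M ≤ 2 * m * ((t - 1) * Nat.choose s t) * (s * s)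
      + (t - 1) * (t - 1) * onesCount (blockB M) := by
  classical
  rw [onesCount_eq_sum M hs]
  rw [← Finset.sum_filter_add_sum_filter_not Finset.univ
    (fun p : Fin m × Fin m => t ≤ (colSet M p.1 p.2).card ∨ t ≤ (rowSet M p.1 p.2).card)]
  apply Nat.add_le_add
  · -- bad blocks
    calc (Finset.univ.filter fun p : Fin m × Fin m =>
            t ≤ (colSet M p.1 p.2).card ∨ t ≤ (rowSet M p.1 p.2).card).sum
            (fun p => blockOnes M p.1 p.2)
        ≤ (Finset.univ.filter fun p : Fin m × Fin m =>
            t ≤ (colSet M p.1 p.2).card ∨ t ≤ (rowSet M p.1 p.2).card).card * (s * s) := by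
          rw [← smul_eq_mul]
          exact Finset.sum_le_card_nsmul _ _ _ (fun p _ => blockOnes_le_sq M p.1 p.2)
    _ ≤ (m * ((t - 1) * Nat.choose s t) + m * ((t - 1) * Nat.choose s t)) * (s * s) := by
          apply Nat.mul_le_mul_right
          rw [Finset.filter_or]
          calc _ ≤ _ := Finset.card_union_le _ _
          _ ≤ _ := Nat.add_le_add (wide_total M ht hP hM) (tall_total M ht hP hM)
    _ = 2 * m * ((t - 1) * Nat.choose s t) * (s * s) := by ring
  · -- good blocks
    rw [← Finset.sum_filter_add_sum_filter_not
      (Finset.univ.filter fun p : Fin m × Fin m =>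
        ¬(t ≤ (colSet M p.1 p.2).card ∨ t ≤ (rowSet M p.1 p.2).card))
      (fun p => blockB M p.1 p.2 = true)]
    have hzero : ((Finset.univ.filter fun p : Fin m × Fin m =>
        ¬(t ≤ (colSet M p.1 p.2).card ∨ t ≤ (rowSet M p.1 p.2).card)).filter
          fun p => ¬ blockB M p.1 p.2 = true).sum (fun p => blockOnes M p.1 p.2) = 0 := by
      apply Finset.sum_eq_zero
      intro p hp
      simp only [Finset.mem_filter] at hp
      exact blockOnes_eq_zero M (Bool.not_eq_true _ ▸ hp.2)
    rw [hzero, Nat.add_zero]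
    calc ((Finset.univ.filter fun p : Fin m × Fin m =>
            ¬(t ≤ (colSet M p.1 p.2).card ∨ t ≤ (rowSet M p.1 p.2).card)).filter
              fun p => blockB M p.1 p.2 = true).sum (fun p => blockOnes M p.1 p.2)
        ≤ ((Finset.univ.filter fun p : Fin m × Fin m =>
            ¬(t ≤ (colSet M p.1 p.2).card ∨ t ≤ (rowSet M p.1 p.2).card)).filter
              fun p => blockB M p.1 p.2 = true).card * ((t - 1) * (t - 1)) := by
          rw [← smul_eq_mul]
          apply Finset.sum_le_card_nsmul
          intro p hp
          simp only [Finset.mem_filter, Finset.mem_univ, true_and, not_or, not_le] at hp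
          calc blockOnes M p.1 p.2 ≤ (rowSet M p.1 p.2).card * (colSet M p.1 p.2).card :=
                blockOnes_le_mul M p.1 p.2
          _ ≤ (t - 1) * (t - 1) := Nat.mul_le_mul (by omega) (by omega)
    _ ≤ onesCount (blockB M) * ((t - 1) * (t - 1)) := by
          apply Nat.mul_le_mul_right
          rw [onesCount]
          apply Finset.card_le_card
          intro p hp
          simp only [Finset.mem_filter, Finset.mem_univ, true_and] at hp ⊢
          exact hp.2
    _ = (t - 1) * (t - 1) * onesCount (blockB M) := by ring


lemma pad_exists {n N : ℕ} (hnN : n ≤ N) {t : ℕ} {P : Fin t → Fin t → Bool}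
    (hP : IsPermMatrix P) (M : Fin n → Fin n → Bool) (hM : ¬ ContainsPat M P) :
    ∃ M' : Fin N → Fin N → Bool, ¬ ContainsPat M' P ∧ onesCount M ≤ onesCount M' := by
  classical
  set M' : Fin N → Fin N → Bool := fun i j =>
    if h : i.val < n ∧ j.val < n then M ⟨i.val, h.1⟩ ⟨j.val, h.2⟩ else false with hM'def
  have key : ∀ i j, M' i j = true →
      ∃ (hi : i.val < n) (hj : j.val < n), M ⟨i.val, hi⟩ ⟨j.val, hj⟩ = true := by
    intro i j hij
    rw [hM'def] at hij
    by_cases h : i.val < n ∧ j.val < n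
    · refine ⟨h.1, h.2, ?_⟩
      simp only [dif_pos h] at hij
      exact hij
    · simp only [dif_neg h] at hij
      exact absurd hij (by simp)
  refine ⟨M', ?_, ?_⟩
  · intro ⟨r, c, hr, hc, h⟩
    obtain ⟨σ, hσbij, hσ⟩ := perm_fun hP
    obtain ⟨τ, hτ⟩ := hσbij.surjective.hasRightInverse
    have hrlt : ∀ a, (r a).val < n := fun a =>
      (key _ _ (h a (σ a) ((hσ a (σ a)).mpr rfl))).choose
    have hclt : ∀ b, (c b).val < n := by
      intro b
      have hb : σ (τ b) = b := hτ b
      exact (key _ _ (h (τ b) b ((hσ (τ b) b).mpr hb.symm))).choose_spec.choose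
    apply hM
    refine ⟨fun a => ⟨(r a).val, hrlt a⟩, fun b => ⟨(c b).val, hclt b⟩, ?_, ?_, ?_⟩
    · intro a a' haa'
      exact Fin.mk_lt_mk.mpr (Fin.lt_def.mp (hr haa'))
    · intro b b' hbb'
      exact Fin.mk_lt_mk.mpr (Fin.lt_def.mp (hc hbb'))
    · intro a b hab
      obtain ⟨hi, hj, hMij⟩ := key _ _ (h a b hab)
      exact hMij
  · rw [onesCount, onesCount]
    apply Finset.card_le_card_of_injOn
      (fun p : Fin n × Fin n =>
        ((⟨p.1.val, lt_of_lt_of_le p.1.isLt hnN⟩ : Fin N),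
         (⟨p.2.val, lt_of_lt_of_le p.2.isLt hnN⟩ : Fin N)))
    · intro p hp
      simp only [Finset.mem_filter, Finset.mem_univ, true_and] at hp ⊢
      rw [hM'def]
      have h : (p.1.val < n ∧ p.2.val < n) := ⟨p.1.isLt, p.2.isLt⟩
      simp only [dif_pos h]
      simpa using hp
    · intro p _ p' _ hpp'
      have h1 := congrArg (fun q : Fin N × Fin N => q.1.val) hpp'
      have h2 := congrArg (fun q : Fin N × Fin N => q.2.val) hpp'
      exact Prod.ext (Fin.ext h1) (Fin.ext h2)


/-- the constant in the Marcus–Tardos bound -/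
def mtC (t : ℕ) : ℕ := (t ^ 2 * t ^ 2) * (1 + 2 * (t - 1) * Nat.choose (t ^ 2) t * (t ^ 2 * t ^ 2))

lemma arith (d K : ℕ) :
    (K + (d+1)*(d+1) * (((d+2)^2 * (d+2)^2) * (1 + K))) * ((d+2)^2 + 1)
      ≤ ((d+2)^2 * (d+2)^2) * (1 + K) * ((d+2)^2 * (d+2)^2) := by
  have h1 : K + (d+1)*(d+1) * (((d+2)^2 * (d+2)^2) * (1 + K))
      ≤ (1 + K) * (1 + (d+1)*(d+1)*((d+2)^2*(d+2)^2)) := by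
    have : (1 + K) * (1 + (d+1)*(d+1)*((d+2)^2*(d+2)^2))
        = (K + (d+1)*(d+1) * (((d+2)^2 * (d+2)^2) * (1 + K))) + 1 := by ring
    omega
  have h2 : (1 + (d+1)*(d+1)*((d+2)^2*(d+2)^2)) * ((d+2)^2+1)
      ≤ ((d+2)^2*(d+2)^2) * ((d+2)^2*(d+2)^2) := by
    have : ((d+2)^2*(d+2)^2) * ((d+2)^2*(d+2)^2)
        = (1 + (d+1)*(d+1)*((d+2)^2*(d+2)^2)) * ((d+2)^2+1)
          + (171 + 636*d + 999*d^2 + 872*d^3 + 459*d^4 + 146*d^5 + 26*d^6 + 2*d^7) := by ring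
    omega
  calc (K + (d+1)*(d+1) * (((d+2)^2 * (d+2)^2) * (1 + K))) * ((d+2)^2 + 1)
      ≤ ((1 + K) * (1 + (d+1)*(d+1)*((d+2)^2*(d+2)^2))) * ((d+2)^2 + 1) :=
        Nat.mul_le_mul_right _ h1
  _ = (1 + K) * ((1 + (d+1)*(d+1)*((d+2)^2*(d+2)^2)) * ((d+2)^2+1)) := by ring
  _ ≤ (1 + K) * (((d+2)^2*(d+2)^2) * ((d+2)^2*(d+2)^2)) := Nat.mul_le_mul_left _ h2
  _ = ((d+2)^2 * (d+2)^2) * (1 + K) * ((d+2)^2 * (d+2)^2) := by ring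

lemma key_ineq (t : ℕ) (ht : 2 ≤ t) (K : ℕ) :
    (K + (t-1)*(t-1) * ((t^2*t^2)*(1+K))) * (t^2 + 1) ≤ (t^2*t^2)*(1+K) * (t^2 * t^2) := by
  obtain ⟨d, rfl⟩ : ∃ d, t = d + 2 := ⟨t - 2, by omega⟩
  have hd1 : d + 2 - 1 = d + 1 := rfl
  rw [hd1]
  exact arith d K

theorem nat_bound {t : ℕ} (ht2 : 2 ≤ t) {P : Fin t → Fin t → Bool} (hP : IsPermMatrix P) :
    ∀ n (M : Fin n → Fin n → Bool), ¬ ContainsPat M P → onesCount M ≤ mtC t * n := by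
  have ht1 : 1 ≤ t := le_trans (by norm_num) ht2
  set s := t ^ 2 with hs_def
  have hs : 0 < s := by positivity
  have hs4 : 4 ≤ s := by rw [hs_def]; nlinarith
  set K := 2 * (t - 1) * Nat.choose s t * (s * s) with hK_def
  have hc : mtC t = (s * s) * (1 + K) := rfl
  intro n
  induction n using Nat.strong_induction_on with
  | _ n ih =>
    intro M hM
    by_cases hn : n ≤ s * s
    · calc onesCount M ≤ n * n := by
            rw [onesCount]
            calc _ ≤ (Finset.univ : Finset (Fin n × Fin n)).card :=
                  Finset.card_le_card (Finset.filter_subset _ _)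
            _ = n * n := by simp
      _ ≤ (s * s) * n := Nat.mul_le_mul_right n hn
      _ ≤ mtC t * n := by
            rw [hc]
            exact Nat.mul_le_mul_right n (Nat.le_mul_of_pos_right _ (by omega))
    · push_neg at hn
      set m := n / s + 1 with hm_def
      have hnsm : n ≤ s * m := by
        have h1 : n < m * s := (Nat.div_lt_iff_lt_mul hs).mp (by omega)
        rw [mul_comm]
        exact le_of_lt h1
      have hmn : m < n := by
        have h1 : n / s ≤ n / 4 := Nat.div_le_div_left hs4 (by norm_num)
        have hn17 : 17 ≤ n := by nlinarith
        have h2 : n / 4 < n - 1 := by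
          rw [Nat.div_lt_iff_lt_mul (by norm_num)]
          omega
        omega
      have hmss : m * (s * s) ≤ n * (s + 1) := by
        have h1 : m * s ≤ n + s := by
          have h0 := Nat.div_mul_le_self n s
          calc m * s = n / s * s + s := by rw [hm_def]; ring
          _ ≤ n + s := by omega
        calc m * (s * s) = (m * s) * s := by ring
        _ ≤ (n + s) * s := Nat.mul_le_mul_right s h1
        _ = n * s + s * s := by ring
        _ ≤ n * s + n := by omega
        _ = n * (s + 1) := by ring
      obtain ⟨M', hM'avoid, hle⟩ := pad_exists hnsm hP M hM
      have hagg := aggregate M' hs ht1 hP hM'avoid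
      have hB := ih m hmn (blockB M') (blockB_avoids M' hP hM'avoid)
      have hmain : onesCount M ≤ (K + (t-1)*(t-1) * mtC t) * m := by
        calc onesCount M ≤ onesCount M' := hle
        _ ≤ 2 * m * ((t-1) * Nat.choose s t) * (s * s)
              + (t-1)*(t-1) * onesCount (blockB M') := hagg
        _ ≤ K * m + (t-1)*(t-1) * (mtC t * m) := by
              apply Nat.add_le_add
              · apply le_of_eq
                rw [hK_def]; ring
              · exact Nat.mul_le_mul_left _ hB
        _ = (K + (t-1)*(t-1) * mtC t) * m := by ring
      have hineq : (K + (t-1)*(t-1) * mtC t) * (s + 1) ≤ mtC t * (s * s) := by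
        rw [hc, hs_def]
        rw [hK_def] at *
        exact key_ineq t ht2 _
      have hfinal : onesCount M * (s * s) ≤ (mtC t * n) * (s * s) := by
        calc onesCount M * (s * s) ≤ ((K + (t-1)*(t-1) * mtC t) * m) * (s * s) :=
              Nat.mul_le_mul_right _ hmain
        _ = (K + (t-1)*(t-1) * mtC t) * (m * (s * s)) := by ring
        _ ≤ (K + (t-1)*(t-1) * mtC t) * (n * (s + 1)) := Nat.mul_le_mul_left _ hmss
        _ = ((K + (t-1)*(t-1) * mtC t) * (s + 1)) * n := by ring
        _ ≤ (mtC t * (s * s)) * n := Nat.mul_le_mul_right _ hineq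
        _ = (mtC t * n) * (s * s) := by ring
      exact Nat.le_of_mul_le_mul_right hfinal (by positivity)

end MT


/-- Marcus–Tardos: for every `t ≥ 1` and every `t×t` permutation matrix `P` there is a
constant `C > 0` such that every `n×n` 0-1 matrix avoiding `P` has at most `C·n` ones. -/
theorem marcus_tardos :
    ∀ t : ℕ, 1 ≤ t → ∀ P : Fin t → Fin t → Bool, IsPermMatrix P →
      ∃ C : ℝ, 0 < C ∧ ∀ n : ℕ, ∀ M : Fin n → Fin n → Bool,
        ¬ ContainsPat M P → (onesCount M : ℝ) ≤ C * n := by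
  intro t ht P hP
  rcases Nat.lt_or_ge t 2 with h2 | h2
  · -- t = 1 : an avoider has no ones at all
    have ht1 : t = 1 := by omega
    subst ht1
    refine ⟨1, one_pos, ?_⟩
    intro n M hM
    have hzero : onesCount M = 0 := by
      rw [onesCount, Finset.card_eq_zero, Finset.filter_eq_empty_iff]
      intro p _
      intro hp
      apply hM
      refine ⟨fun _ => p.1, fun _ => p.2, ?_, ?_, fun a b _ => hp⟩
      · intro a b hab
        exact absurd (Subsingleton.elim a b) (ne_of_lt hab)
      · intro a b hab
        exact absurd (Subsingleton.elim a b) (ne_of_lt hab)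
    rw [hzero]
    simp
  · refine ⟨(MT.mtC t : ℝ), ?_, ?_⟩
    · have ht0 : 0 < t := by omega
      have : 0 < MT.mtC t := by
        rw [MT.mtC]
        positivity
      exact_mod_cast this
    · intro n M hM
      have h := MT.nat_bound h2 hP n M hM
      calc (onesCount M : ℝ) ≤ ((MT.mtC t * n : ℕ) : ℝ) := Nat.cast_le.mpr h
      _ = (MT.mtC t : ℝ) * n := by push_cast; ring
end

section
/- For every integer t ≥ 1 there is a constant C_t > 0 such that the following holds. Let G be a cyclically-ordered graph on Fin n. If G does not contain two disjoint t-element vertex subsets S and T such that every vertex of S and every vertex of T form a double cherry, then G has at most C_t · n · log(n+1) edges. -/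
open Finset
open scoped Classical

section Helpers

lemma exists_top_subset (S : Finset ℕ) (k : ℕ) (hk : k ≤ S.card) :
    ∃ W ⊆ S, W.card = k ∧ ∀ w ∈ W, ∀ y ∈ S, w ≤ y → y ∈ W := by
  induction k with
  | zero => exact ⟨∅, by simp⟩
  | succ k ih =>
    obtain ⟨W, hWS, hWc, hWup⟩ := ih (Nat.le_of_succ_le hk)
    have hne : (S \ W).Nonempty := by
      rw [Finset.sdiff_nonempty]
      intro hsub
      have := Finset.card_le_card hsub
      omega
    set m := (S \ W).max' hne with hm
    have hmS : m ∈ S \ W := Finset.max'_mem _ hne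
    have hmW : m ∉ W := (Finset.mem_sdiff.mp hmS).2
    refine ⟨insert m W, ?_, ?_, ?_⟩
    · intro z hz
      rcases Finset.mem_insert.mp hz with rfl | hz
      · exact (Finset.mem_sdiff.mp hmS).1
      · exact hWS hz
    · rw [Finset.card_insert_of_notMem hmW, hWc]
    · intro w hw y hy hwy
      rcases Finset.mem_insert.mp hw with rfl | hw
      · by_cases hyW : y ∈ W
        · exact Finset.mem_insert_of_mem hyW
        · have : y ∈ S \ W := Finset.mem_sdiff.mpr ⟨hy, hyW⟩
          have := Finset.le_max' _ _ this
          have : y = m := le_antisymm this hwy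
          simp [this]
      · exact Finset.mem_insert_of_mem (hWup w hw y hy hwy)

lemma window_eq (act1 : ℕ → Prop) (B W W' : Finset ℕ)
    (hWa : ∀ w ∈ W, act1 w) (hW'a : ∀ w ∈ W', act1 w)
    (hWc : ∀ z ∈ B, act1 z → (∃ w ∈ W, w ≤ z) → (∃ w ∈ W, z ≤ w) → z ∈ W)
    (hW'c : ∀ z ∈ B, act1 z → (∃ w ∈ W', w ≤ z) → (∃ w ∈ W', z ≤ w) → z ∈ W')
    (hWB : W ⊆ B) (hW'B : W' ⊆ B)
    (w : ℕ) (hw : w ∈ W) (hw' : w ∈ W')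
    (hcard : W.card = W'.card)
    (hrank : (W.filter (· ≤ w)).card = (W'.filter (· ≤ w)).card) :
    W = W' := by
  have hWne : W.Nonempty := ⟨w, hw⟩
  have hW'ne : W'.Nonempty := ⟨w, hw'⟩
  -- lower halves
  have low : W.filter (· ≤ w) = W'.filter (· ≤ w) := by
    rcases le_total (W.min' hWne) (W'.min' hW'ne) with h | h
    · refine (Finset.eq_of_subset_of_card_le ?_ (le_of_eq hrank)).symm
      intro z hz
      obtain ⟨hzW', hzw⟩ := Finset.mem_filter.mp hz
      refine Finset.mem_filter.mpr ⟨hWc z (hW'B hzW') (hW'a z hzW')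
        ⟨W.min' hWne, W.min'_mem hWne, le_trans h (W'.min'_le z hzW')⟩
        ⟨w, hw, hzw⟩, hzw⟩
    · refine Finset.eq_of_subset_of_card_le ?_ (le_of_eq hrank.symm)
      intro z hz
      obtain ⟨hzW, hzw⟩ := Finset.mem_filter.mp hz
      refine Finset.mem_filter.mpr ⟨hW'c z (hWB hzW) (hWa z hzW)
        ⟨W'.min' hW'ne, W'.min'_mem hW'ne, le_trans h (W.min'_le z hzW)⟩
        ⟨w, hw', hzw⟩, hzw⟩
  have hcard2 : (W.filter (¬ · ≤ w)).card = (W'.filter (¬ · ≤ w)).card := by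
    have h1 := Finset.card_filter_add_card_filter_not (s := W) (p := (· ≤ w))
    have h2 := Finset.card_filter_add_card_filter_not (s := W') (p := (· ≤ w))
    omega
  have high : W.filter (¬ · ≤ w) = W'.filter (¬ · ≤ w) := by
    by_cases hne : (W.filter (¬ · ≤ w)).Nonempty
    · have hne' : (W'.filter (¬ · ≤ w)).Nonempty := by
        rw [← Finset.card_pos, ← hcard2, Finset.card_pos]; exact hne
      rcases le_total ((W.filter (¬ · ≤ w)).max' hne) ((W'.filter (¬ · ≤ w)).max' hne') with h | h
      · refine Finset.eq_of_subset_of_card_le ?_ (le_of_eq hcard2.symm)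
        intro z hz
        obtain ⟨hzW, hzw⟩ := Finset.mem_filter.mp hz
        have hmax := (W'.filter (¬ · ≤ w)).max'_mem hne'
        obtain ⟨hmaxW', _⟩ := Finset.mem_filter.mp hmax
        refine Finset.mem_filter.mpr ⟨hW'c z (hWB hzW) (hWa z hzW)
          ⟨w, hw', le_of_not_ge hzw⟩
          ⟨_, hmaxW', le_trans (Finset.le_max' _ z hz) h⟩, hzw⟩
      · refine (Finset.eq_of_subset_of_card_le ?_ (le_of_eq hcard2)).symm
        intro z hz
        obtain ⟨hzW', hzw⟩ := Finset.mem_filter.mp hz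
        have hmax := (W.filter (¬ · ≤ w)).max'_mem hne
        obtain ⟨hmaxW, _⟩ := Finset.mem_filter.mp hmax
        refine Finset.mem_filter.mpr ⟨hWc z (hW'B hzW') (hW'a z hzW')
          ⟨w, hw, le_of_not_ge hzw⟩
          ⟨_, hmaxW, le_trans (Finset.le_max' _ z hz) h⟩, hzw⟩
    · have e1 : W.filter (¬ · ≤ w) = ∅ := Finset.not_nonempty_iff_eq_empty.mp hne
      have e2 : W'.filter (¬ · ≤ w) = ∅ := by
        rw [← Finset.card_eq_zero, ← hcard2, Finset.card_eq_zero]; exact e1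
      rw [e1, e2]
  calc W = W.filter (· ≤ w) ∪ W.filter (¬ · ≤ w) :=
        (Finset.filter_union_filter_not_eq _ W).symm
    _ = W'.filter (· ≤ w) ∪ W'.filter (¬ · ≤ w) := by rw [low, high]
    _ = W' := Finset.filter_union_filter_not_eq _ W'

noncomputable def fmin (s : Finset ℕ) : ℕ := if h : s.Nonempty then s.min' h else 0
noncomputable def fmax (s : Finset ℕ) : ℕ := if h : s.Nonempty then s.max' h else 0

lemma fmin_mem {s : Finset ℕ} (h : s.Nonempty) : fmin s ∈ s := by
  rw [fmin, dif_pos h]; exact s.min'_mem h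

lemma fmin_le {s : Finset ℕ} {a : ℕ} (ha : a ∈ s) : fmin s ≤ a := by
  rw [fmin, dif_pos ⟨a, ha⟩]; exact s.min'_le a ha

lemma fmax_mem {s : Finset ℕ} (h : s.Nonempty) : fmax s ∈ s := by
  rw [fmax, dif_pos h]; exact s.max'_mem h

lemma le_fmax {s : Finset ℕ} {a : ℕ} (ha : a ∈ s) : a ≤ fmax s := by
  rw [fmax, dif_pos ⟨a, ha⟩]; exact s.le_max' a ha

lemma card_filter_product (A B : Finset ℕ) (p : ℕ → ℕ → Prop) [∀ x y, Decidable (p x y)] :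
    ((A ×ˢ B).filter fun q => p q.1 q.2).card = ∑ x ∈ A, (B.filter fun y => p x y).card := by
  rw [Finset.card_filter, Finset.sum_product]
  exact Finset.sum_congr rfl fun x _ => (Finset.card_filter _ _).symm

end Helpers

/-- abbreviation for the "consecutive active window" property -/
def ConsA (act : ℕ → ℕ → Prop) (B : Finset ℕ) (W : Finset ℕ) (h : ℕ) : Prop :=
  (∀ w ∈ W, act h w) ∧ ∀ z ∈ B, act h z → (∃ w ∈ W, w ≤ z) → (∃ w ∈ W, z ≤ w) → z ∈ W

theorem sweep (t : ℕ) (ht : 1 ≤ t) (P act : ℕ → ℕ → Prop) (A B : Finset ℕ)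
    (hPA : ∀ ⦃x y⦄, P x y → x ∈ A)
    (hactB : ∀ ⦃x y⦄, act x y → y ∈ B)
    (hPact : ∀ ⦃x y⦄, P x y → act x y)
    (hconv : ∀ ⦃y x₁ x₂ x₃⦄, x₁ ≤ x₂ → x₂ ≤ x₃ → act x₁ y → act x₃ y → act x₂ y)
    (hwin : ∀ ⦃x y₁ y y₂⦄, P x y₁ → P x y₂ → y₁ ≤ y → y ≤ y₂ → act x y → P x y)
    (hK : ∀ S T : Finset ℕ, S.card = t → T.card = t → ¬ ∀ x ∈ S, ∀ y ∈ T, P x y)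
    (R : Finset (ℕ × ℕ)) (hR : ∀ q, q ∈ R ↔ (q.1 ∈ A ∧ q.2 ∈ B ∧ P q.1 q.2)) :
    R.card ≤ (t-1) * A.card + 3 * t * t * B.card := by
  classical
  have hReq : R = (A ×ˢ B).filter fun q => P q.1 q.2 := by
    ext q
    rw [hR, Finset.mem_filter, Finset.mem_product]
    constructor
    · rintro ⟨h1, h2, h3⟩; exact ⟨⟨h1, h2⟩, h3⟩
    · rintro ⟨⟨h1, h2⟩, h3⟩; exact ⟨h1, h2, h3⟩
  rw [hReq]
  -- basic sets
  set row : ℕ → Finset ℕ := fun x => B.filter fun y => P x y with hrow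
  set D : Finset (ℕ × ℕ) := (A ×ˢ B).filter
      (fun q => P q.1 q.2 ∧ t ≤ ((row q.1).filter (· ≤ q.2)).card) with hD
  -- Step 1 : total count ≤ (t-1)*|A| + |D|
  have step1 : ((A ×ˢ B).filter fun q => P q.1 q.2).card ≤ (t-1) * A.card + D.card := by
    have e1 : ((A ×ˢ B).filter fun q => P q.1 q.2).card = ∑ x ∈ A, (row x).card :=
      card_filter_product A B P
    have e2 : D.card = ∑ x ∈ A, ((row x).filter
        (fun y => t ≤ ((row x).filter (· ≤ y)).card)).card := by
      have := card_filter_product A B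
        (fun x y => P x y ∧ t ≤ ((row x).filter (· ≤ y)).card)
      rw [hD, this]
      refine Finset.sum_congr rfl fun x _ => ?_
      congr 1
      rw [hrow]
      rw [Finset.filter_filter]
    rw [e1]
    have hrowsum : ∀ x ∈ A, (row x).card ≤ (t-1) +
        ((row x).filter (fun y => t ≤ ((row x).filter (· ≤ y)).card)).card := by
      intro x _
      have hpart := Finset.card_filter_add_card_filter_not (s := row x)
        (p := fun y => t ≤ ((row x).filter (· ≤ y)).card)
      have hlow : ((row x).filter (fun y => ¬ t ≤ ((row x).filter (· ≤ y)).card)).card ≤ t - 1 := by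
        have hmaps : ∀ y ∈ (row x).filter (fun y => ¬ t ≤ ((row x).filter (· ≤ y)).card),
            ((row x).filter (· ≤ y)).card ∈ Finset.Icc 1 (t-1) := by
          intro y hy
          obtain ⟨hyrow, hyc⟩ := Finset.mem_filter.mp hy
          refine Finset.mem_Icc.mpr ⟨?_, ?_⟩
          · have : y ∈ (row x).filter (· ≤ y) := Finset.mem_filter.mpr ⟨hyrow, le_refl y⟩
            exact Nat.one_le_iff_ne_zero.mpr (Finset.card_ne_zero_of_mem this)
          · omega
        have hmono : ∀ y ∈ row x, ∀ y' ∈ row x, y < y' →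
            ((row x).filter (· ≤ y)).card < ((row x).filter (· ≤ y')).card := by
          intro y hy y' hy' hlt
          apply Finset.card_lt_card
          constructor
          · intro z hz
            obtain ⟨h1, h2⟩ := Finset.mem_filter.mp hz
            exact Finset.mem_filter.mpr ⟨h1, le_trans h2 (le_of_lt hlt)⟩
          · intro hsub
            have : y' ∈ (row x).filter (· ≤ y) :=
              hsub (Finset.mem_filter.mpr ⟨hy', le_refl y'⟩)
            have := (Finset.mem_filter.mp this).2
            omega
        have hinj : Set.InjOn (fun y => ((row x).filter (· ≤ y)).card)
            ((row x).filter (fun y => ¬ t ≤ ((row x).filter (· ≤ y)).card)) := by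
          intro y hy y' hy' heq
          simp only [Finset.coe_filter, Set.mem_setOf_eq] at hy hy'
          rcases lt_trichotomy y y' with h | h | h
          · exact absurd heq (Nat.ne_of_lt (hmono y hy.1 y' hy'.1 h))
          · exact h
          · exact absurd heq.symm (Nat.ne_of_lt (hmono y' hy'.1 y hy.1 h))
        calc ((row x).filter (fun y => ¬ t ≤ ((row x).filter (· ≤ y)).card)).card
            ≤ (Finset.Icc 1 (t-1)).card := Finset.card_le_card_of_injOn _ hmaps hinj
          _ = t - 1 := by rw [Nat.card_Icc]; omega
      omega
    calc ∑ x ∈ A, (row x).card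
        ≤ ∑ x ∈ A, ((t-1) + ((row x).filter
            (fun y => t ≤ ((row x).filter (· ≤ y)).card)).card) :=
          Finset.sum_le_sum hrowsum
      _ = (t-1) * A.card + ∑ x ∈ A, ((row x).filter
            (fun y => t ≤ ((row x).filter (· ≤ y)).card)).card := by
          rw [Finset.sum_add_distrib, Finset.sum_const, smul_eq_mul, mul_comm]
      _ = (t-1) * A.card + D.card := by rw [e2]
  -- Step 2 : the window function
  have hWex : ∀ q : ℕ × ℕ, ∃ W : Finset ℕ, q ∈ D →
      W ⊆ ((row q.1).filter (· ≤ q.2)) ∧ W.card = t ∧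
        (∀ w ∈ W, ∀ y ∈ (row q.1).filter (· ≤ q.2), w ≤ y → y ∈ W) := by
    intro q
    by_cases hq : q ∈ D
    · have hc : t ≤ ((row q.1).filter (· ≤ q.2)).card :=
        ((Finset.mem_filter.mp hq).2).2
      obtain ⟨W, h1, h2, h3⟩ := exists_top_subset _ t hc
      exact ⟨W, fun _ => ⟨h1, h2, h3⟩⟩
    · exact ⟨∅, fun h => absurd h hq⟩
  choose Wf hWf using hWex
  -- basic facts about Wf for q ∈ D
  have hWsub : ∀ q ∈ D, Wf q ⊆ (row q.1).filter (· ≤ q.2) := fun q hq => ((hWf q) hq).1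
  have hWcard : ∀ q ∈ D, (Wf q).card = t := fun q hq => ((hWf q) hq).2.1
  have hWup : ∀ q ∈ D, ∀ w ∈ Wf q, ∀ y ∈ (row q.1).filter (· ≤ q.2), w ≤ y → y ∈ Wf q :=
    fun q hq => ((hWf q) hq).2.2
  have hWrow : ∀ q ∈ D, ∀ w ∈ Wf q, P q.1 w := by
    intro q hq w hw
    exact (Finset.mem_filter.mp (Finset.mem_filter.mp (hWsub q hq hw)).1).2
  have hWle : ∀ q ∈ D, ∀ w ∈ Wf q, w ≤ q.2 := by
    intro q hq w hw
    exact (Finset.mem_filter.mp (hWsub q hq hw)).2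
  have hWB : ∀ q ∈ D, Wf q ⊆ B := by
    intro q hq w hw
    exact Finset.mem_filter.mp (Finset.mem_filter.mp (hWsub q hq hw)).1 |>.1
  have hWne : ∀ q ∈ D, (Wf q).Nonempty := by
    intro q hq
    rw [← Finset.card_pos, hWcard q hq]; omega
  have hvW : ∀ q ∈ D, q.2 ∈ Wf q := by
    intro q hq
    obtain ⟨w₀, hw₀⟩ := hWne q hq
    have hPq : P q.1 q.2 := ((Finset.mem_filter.mp hq).2).1
    have hq2 : q.2 ∈ (row q.1).filter (· ≤ q.2) := by
      refine Finset.mem_filter.mpr ⟨?_, le_refl _⟩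
      exact Finset.mem_filter.mpr ⟨hactB (hPact hPq), hPq⟩
    exact hWup q hq w₀ hw₀ q.2 hq2 (hWle q hq w₀ hw₀)
  -- consecutive-active property at height q.1
  have hconsx : ∀ q ∈ D, ConsA act B (Wf q) q.1 := by
    intro q hq
    constructor
    · exact fun w hw => hPact (hWrow q hq w hw)
    · intro z hzB hza ⟨w₁, hw₁, h₁⟩ ⟨w₂, hw₂, h₂⟩
      have hPz : P q.1 z := hwin (hWrow q hq w₁ hw₁) (hWrow q hq w₂ hw₂) h₁ h₂ hza
      have hz : z ∈ (row q.1).filter (· ≤ q.2) := by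
        refine Finset.mem_filter.mpr ⟨Finset.mem_filter.mpr ⟨hzB, hPz⟩, ?_⟩
        exact le_trans h₂ (hWle q hq w₂ hw₂)
      exact hWup q hq w₁ hw₁ z hz h₁
  -- starting time of the occurrence
  set Sset : ℕ × ℕ → Finset ℕ := fun q =>
    (Finset.range (q.1+1)).filter fun s => ∀ h ∈ Finset.Icc s q.1, ConsA act B (Wf q) h
    with hSset
  have hSne : ∀ q ∈ D, (Sset q).Nonempty := by
    intro q hq
    refine ⟨q.1, Finset.mem_filter.mpr ⟨Finset.self_mem_range_succ _, ?_⟩⟩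
    intro h hh
    obtain ⟨h1, h2⟩ := Finset.mem_Icc.mp hh
    have : h = q.1 := le_antisymm h2 h1
    rw [this]; exact hconsx q hq
  set sf : ℕ × ℕ → ℕ := fun q => fmin (Sset q) with hsf
  have hsfmem : ∀ q ∈ D, sf q ∈ Sset q := fun q hq => fmin_mem (hSne q hq)
  have hsfle : ∀ q ∈ D, sf q ≤ q.1 := by
    intro q hq
    have := (Finset.mem_filter.mp (hsfmem q hq)).1
    rw [Finset.mem_range] at this; omega
  have hcons : ∀ q ∈ D, ∀ h, sf q ≤ h → h ≤ q.1 → ConsA act B (Wf q) h := by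
    intro q hq h h1 h2
    exact (Finset.mem_filter.mp (hsfmem q hq)).2 h (Finset.mem_Icc.mpr ⟨h1, h2⟩)
  have hminimal : ∀ q ∈ D, sf q ≠ 0 → ¬ ConsA act B (Wf q) (sf q - 1) := by
    intro q hq hne hcon
    have hmem : sf q - 1 ∈ Sset q := by
      refine Finset.mem_filter.mpr ⟨Finset.mem_range.mpr (by have := hsfle q hq; omega), ?_⟩
      intro h hh
      obtain ⟨h1, h2⟩ := Finset.mem_Icc.mp hh
      rcases Nat.eq_or_lt_of_le h1 with heq | hlt
      · rw [← heq]; exact hcon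
      · exact hcons q hq h (by omega) h2
    have h2 : sf q ≤ sf q - 1 := fmin_le hmem
    omega
  -- the three case-data functions
  set birthF : ℕ × ℕ → Finset ℕ := fun q => (Wf q).filter fun w => ¬ act (sf q - 1) w
    with hbirthF
  set Vset : ℕ × ℕ → Finset ℕ := fun q =>
    B.filter fun z => act (sf q - 1) z ∧ (∃ w ∈ Wf q, w ≤ z) ∧ (∃ w ∈ Wf q, z ≤ w) ∧ z ∉ Wf q
    with hVset
  set lq : ℕ × ℕ → ℕ := fun q => fmax ((Wf q).filter (· < fmin (Vset q))) with hlq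
  set κ : ℕ × ℕ → ℕ × ℕ × ℕ := fun q =>
    if sf q = 0 then (0, fmin (Wf q), 0)
    else if (birthF q).Nonempty then
      (1, fmin (birthF q), ((Wf q).filter (· ≤ fmin (birthF q))).card)
    else (2, fmin (Vset q), ((Wf q).filter (· ≤ lq q)).card) with hκ
  -- facts for case 1
  have hbirth1 : ∀ q ∈ D, sf q ≠ 0 → (birthF q).Nonempty →
      fmin (birthF q) ∈ Wf q ∧ act (sf q) (fmin (birthF q)) ∧
        ¬ act (sf q - 1) (fmin (birthF q)) := by
    intro q hq h0 hb
    have hmem := fmin_mem hb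
    have h1 : fmin (birthF q) ∈ Wf q := (Finset.mem_filter.mp hmem).1
    have h2 : ¬ act (sf q - 1) (fmin (birthF q)) := (Finset.mem_filter.mp hmem).2
    exact ⟨h1, (hcons q hq (sf q) (le_refl _) (hsfle q hq)).1 _ h1, h2⟩
  -- facts for case 2
  have hcase2 : ∀ q ∈ D, sf q ≠ 0 → ¬ (birthF q).Nonempty →
      (Vset q).Nonempty := by
    intro q hq h0 hb
    have hC1 : ∀ w ∈ Wf q, act (sf q - 1) w := by
      intro w hw
      by_contra hna
      exact hb ⟨w, Finset.mem_filter.mpr ⟨hw, hna⟩⟩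
    have hC2 : ¬ ∀ z ∈ B, act (sf q - 1) z → (∃ w ∈ Wf q, w ≤ z) →
        (∃ w ∈ Wf q, z ≤ w) → z ∈ Wf q :=
      fun hC2 => (hminimal q hq h0) ⟨hC1, hC2⟩
    push_neg at hC2
    obtain ⟨z, hzB, hza, hz1, hz2, hzW⟩ := hC2
    exact ⟨z, Finset.mem_filter.mpr ⟨hzB, hza, hz1, hz2, hzW⟩⟩
  have hVprop : ∀ q ∈ D, (Vset q).Nonempty →
      act (sf q - 1) (fmin (Vset q)) ∧ (∃ w ∈ Wf q, w ≤ fmin (Vset q)) ∧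
        (∃ w ∈ Wf q, fmin (Vset q) ≤ w) ∧ fmin (Vset q) ∉ Wf q ∧ fmin (Vset q) ∈ B := by
    intro q hq hV
    have hmem := fmin_mem hV
    obtain ⟨h1, h2, h3, h4, h5⟩ := Finset.mem_filter.mp hmem
    exact ⟨h2, h3, h4, h5, h1⟩
  have hxnact : ∀ q ∈ D, (Vset q).Nonempty → ¬ act (sf q) (fmin (Vset q)) := by
    intro q hq hV hact
    obtain ⟨h1, h2, h3, h4, h5⟩ := hVprop q hq hV
    exact h4 ((hcons q hq (sf q) (le_refl _) (hsfle q hq)).2 _ h5 hact h2 h3)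
  have hlqmem : ∀ q ∈ D, (Vset q).Nonempty →
      lq q ∈ Wf q ∧ lq q < fmin (Vset q) := by
    intro q hq hV
    obtain ⟨h1, ⟨w₁, hw₁, hwle⟩, h3, h4, h5⟩ := hVprop q hq hV
    have hlo : fmin (Wf q) < fmin (Vset q) := by
      have e1 : fmin (Wf q) ≤ w₁ := fmin_le hw₁
      have e2 : fmin (Wf q) ≠ fmin (Vset q) := by
        intro heq
        exact h4 (heq ▸ fmin_mem (hWne q hq))
      omega
    have hne : ((Wf q).filter (· < fmin (Vset q))).Nonempty :=
      ⟨fmin (Wf q), Finset.mem_filter.mpr ⟨fmin_mem (hWne q hq), hlo⟩⟩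
    have hmem := fmax_mem hne
    exact ⟨(Finset.mem_filter.mp hmem).1, (Finset.mem_filter.mp hmem).2⟩
  have hlqglob : ∀ q ∈ D, (Vset q).Nonempty →
      lq q = fmax (B.filter fun z => act (sf q) z ∧ z < fmin (Vset q)) := by
    intro q hq hV
    obtain ⟨h1, ⟨w₁, hw₁, hwle⟩, ⟨w₂, hw₂, hwge⟩, h4, h5⟩ := hVprop q hq hV
    have hconsq := hcons q hq (sf q) (le_refl _) (hsfle q hq)
    have hlo : fmin (Wf q) < fmin (Vset q) := by
      have e1 : fmin (Wf q) ≤ w₁ := fmin_le hw₁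
      have e2 : fmin (Wf q) ≠ fmin (Vset q) := fun heq => h4 (heq ▸ fmin_mem (hWne q hq))
      omega
    have hGne : (B.filter fun z => act (sf q) z ∧ z < fmin (Vset q)).Nonempty := by
      refine ⟨fmin (Wf q), Finset.mem_filter.mpr ⟨hWB q hq (fmin_mem (hWne q hq)), ?_, hlo⟩⟩
      exact hconsq.1 _ (fmin_mem (hWne q hq))
    obtain ⟨hlqW, hlqlt⟩ := hlqmem q hq hV
    apply le_antisymm
    · apply le_fmax
      exact Finset.mem_filter.mpr ⟨hWB q hq hlqW, hconsq.1 _ hlqW, hlqlt⟩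
    · have hGmem := fmax_mem hGne
      obtain ⟨hGB, hGact, hGlt⟩ := Finset.mem_filter.mp hGmem
      have hGW : fmax (B.filter fun z => act (sf q) z ∧ z < fmin (Vset q)) ∈ Wf q := by
        apply hconsq.2 _ hGB hGact
        · refine ⟨fmin (Wf q), fmin_mem (hWne q hq), ?_⟩
          apply le_fmax
          exact Finset.mem_filter.mpr ⟨hWB q hq (fmin_mem (hWne q hq)),
            hconsq.1 _ (fmin_mem (hWne q hq)), hlo⟩
        · exact ⟨w₂, hw₂, by omega⟩
      apply le_fmax
      exact Finset.mem_filter.mpr ⟨hGW, hGlt⟩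
  -- uniqueness of birth and death times
  have step_eq : ∀ y s s', 1 ≤ s → 1 ≤ s' → act s y → ¬ act (s-1) y →
      act s' y → ¬ act (s'-1) y → s = s' := by
    intro y s s' h1 h1' h2 h3 h2' h3'
    by_contra hne
    rcases Nat.lt_or_ge s s' with h | h
    · exact h3' (hconv (by omega : s ≤ s' - 1) (by omega : s' - 1 ≤ s') h2 h2')
    · have h' : s' < s := by omega
      exact h3 (hconv (by omega : s' ≤ s - 1) (by omega : s - 1 ≤ s) h2' h2)
  have death_eq : ∀ y s s', 1 ≤ s → 1 ≤ s' → act (s-1) y → ¬ act s y →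
      act (s'-1) y → ¬ act s' y → s = s' := by
    intro y s s' h1 h1' h2 h3 h2' h3'
    by_contra hne
    rcases Nat.lt_or_ge s s' with h | h
    · exact h3 (hconv (by omega : s - 1 ≤ s) (by omega : s ≤ s' - 1) h2 h2')
    · have h' : s' < s := by omega
      exact h3' (hconv (by omega : s' - 1 ≤ s') (by omega : s' ≤ s - 1) h2' h2)
  -- rank of the minimum is 1
  have rank_min : ∀ q ∈ D, ((Wf q).filter (· ≤ fmin (Wf q))).card = 1 := by
    intro q hq
    have : (Wf q).filter (· ≤ fmin (Wf q)) = {fmin (Wf q)} := by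
      apply Finset.eq_singleton_iff_unique_mem.mpr
      refine ⟨Finset.mem_filter.mpr ⟨fmin_mem (hWne q hq), le_refl _⟩, ?_⟩
      intro z hz
      obtain ⟨hzW, hzle⟩ := Finset.mem_filter.mp hz
      exact le_antisymm hzle (fmin_le hzW)
    rw [this, Finset.card_singleton]
  -- branch values of κ
  have hκ0 : ∀ q, sf q = 0 → κ q = (0, fmin (Wf q), 0) := by
    intro q h; simp only [hκ]; rw [if_pos h]
  have hκ1 : ∀ q, sf q ≠ 0 → (birthF q).Nonempty →
      κ q = (1, fmin (birthF q), ((Wf q).filter (· ≤ fmin (birthF q))).card) := by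
    intro q h hb; simp only [hκ]; rw [if_neg h, if_pos hb]
  have hκ2 : ∀ q, sf q ≠ 0 → ¬ (birthF q).Nonempty →
      κ q = (2, fmin (Vset q), ((Wf q).filter (· ≤ lq q)).card) := by
    intro q h hb; simp only [hκ]; rw [if_neg h, if_neg hb]
  have hκsplit : ∀ q, κ q = (0, fmin (Wf q), 0) ∨
      κ q = (1, fmin (birthF q), ((Wf q).filter (· ≤ fmin (birthF q))).card) ∨
      κ q = (2, fmin (Vset q), ((Wf q).filter (· ≤ lq q)).card) := by
    intro q
    by_cases h0 : sf q = 0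
    · exact Or.inl (hκ0 q h0)
    · by_cases hb : (birthF q).Nonempty
      · exact Or.inr (Or.inl (hκ1 q h0 hb))
      · exact Or.inr (Or.inr (hκ2 q h0 hb))
  -- THE FIBER LEMMA
  have hfib : ∀ q ∈ D, ∀ q' ∈ D, κ q = κ q' → Wf q = Wf q' := by
    intro q hq q' hq' heq
    by_cases h0 : sf q = 0 <;> by_cases h0' : sf q' = 0
    · -- 0-0
      rw [hκ0 q h0, hκ0 q' h0'] at heq
      rw [Prod.mk.injEq, Prod.mk.injEq] at heq
      obtain ⟨-, hmin, -⟩ := heq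
      have hc := hcons q hq 0 (by omega) (Nat.zero_le _)
      have hc' := hcons q' hq' 0 (by omega) (Nat.zero_le _)
      refine window_eq (act 0) B (Wf q) (Wf q') hc.1 hc'.1 hc.2 hc'.2 (hWB q hq)
        (hWB q' hq') (fmin (Wf q)) (fmin_mem (hWne q hq))
        (by rw [hmin]; exact fmin_mem (hWne q' hq'))
        (by rw [hWcard q hq, hWcard q' hq'])
        (by rw [rank_min q hq, hmin, rank_min q' hq'])
    · -- 0 vs 1/2 : impossible
      exfalso
      rw [hκ0 q h0] at heq
      by_cases hb' : (birthF q').Nonempty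
      · rw [hκ1 q' h0' hb'] at heq; simp at heq
      · rw [hκ2 q' h0' hb'] at heq; simp at heq
    · exfalso
      rw [hκ0 q' h0'] at heq
      by_cases hb : (birthF q).Nonempty
      · rw [hκ1 q h0 hb] at heq; simp at heq
      · rw [hκ2 q h0 hb] at heq; simp at heq
    · -- both nonzero
      by_cases hb : (birthF q).Nonempty <;> by_cases hb' : (birthF q').Nonempty
      · -- 1-1
        rw [hκ1 q h0 hb, hκ1 q' h0' hb'] at heq
        rw [Prod.mk.injEq, Prod.mk.injEq] at heq
        obtain ⟨-, hw, hrank⟩ := heq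
        obtain ⟨hwW, hact, hnact⟩ := hbirth1 q hq h0 hb
        obtain ⟨hwW', hact', hnact'⟩ := hbirth1 q' hq' h0' hb'
        rw [← hw] at hwW' hact' hnact'
        rw [← hw] at hrank
        have hseq : sf q = sf q' := step_eq _ _ _ (by omega) (by omega) hact hnact hact' hnact'
        have hc := hcons q hq (sf q) (le_refl _) (hsfle q hq)
        have hc' := hcons q' hq' (sf q) (le_of_eq hseq.symm)
          (by rw [hseq]; exact hsfle q' hq')
        exact window_eq (act (sf q)) B (Wf q) (Wf q') hc.1 hc'.1 hc.2 hc'.2 (hWB q hq)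
          (hWB q' hq') (fmin (birthF q)) hwW hwW'
          (by rw [hWcard q hq, hWcard q' hq']) hrank
      · -- 1-2 impossible
        exfalso; rw [hκ1 q h0 hb, hκ2 q' h0' hb'] at heq; simp at heq
      · exfalso; rw [hκ2 q h0 hb, hκ1 q' h0' hb'] at heq; simp at heq
      · -- 2-2
        rw [hκ2 q h0 hb, hκ2 q' h0' hb'] at heq
        rw [Prod.mk.injEq, Prod.mk.injEq] at heq
        obtain ⟨-, hx, hrank⟩ := heq
        have hV := hcase2 q hq h0 hb
        have hV' := hcase2 q' hq' h0' hb'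
        obtain ⟨ha1, hble, hbge, hnW, hBx⟩ := hVprop q hq hV
        obtain ⟨ha1', hble', hbge', hnW', hBx'⟩ := hVprop q' hq' hV'
        have hna := hxnact q hq hV
        have hna' := hxnact q' hq' hV'
        rw [← hx] at ha1' hna'
        have hseq : sf q = sf q' := death_eq _ _ _ (by omega) (by omega) ha1 hna ha1' hna'
        have hleq : lq q = lq q' := by
          rw [hlqglob q hq hV, hlqglob q' hq' hV', hseq, hx]
        obtain ⟨hlW, -⟩ := hlqmem q hq hV
        obtain ⟨hlW', -⟩ := hlqmem q' hq' hV'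
        rw [← hleq] at hlW'
        rw [← hleq] at hrank
        have hc := hcons q hq (sf q) (le_refl _) (hsfle q hq)
        have hc' := hcons q' hq' (sf q) (le_of_eq hseq.symm)
          (by rw [hseq]; exact hsfle q' hq')
        exact window_eq (act (sf q)) B (Wf q) (Wf q') hc.1 hc'.1 hc.2 hc'.2 (hWB q hq)
          (hWB q' hq') (lq q) hlW hlW'
          (by rw [hWcard q hq, hWcard q' hq']) hrank
  have hfib2 : ∀ q ∈ D, ∀ q' ∈ D, κ q = κ q' → q.2 = q'.2 := by
    intro q hq q' hq' heq
    have hWeq := hfib q hq q' hq' heq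
    have h1 : q.2 ≤ q'.2 := hWle q' hq' q.2 (hWeq ▸ hvW q hq)
    have h2 : q'.2 ≤ q.2 := hWle q hq q'.2 (hWeq.symm ▸ hvW q' hq')
    omega
  have hfibcard : ∀ b ∈ D.image κ, (D.filter fun q => κ q = b).card ≤ t - 1 := by
    intro b hb
    by_contra hgt
    push_neg at hgt
    have hcard_ge : t ≤ (D.filter fun q => κ q = b).card := by omega
    have hFD : (D.filter fun q => κ q = b) ⊆ D := Finset.filter_subset _ _
    have hinj : Set.InjOn Prod.fst (((D.filter fun q => κ q = b) : Finset (ℕ×ℕ)) : Set (ℕ×ℕ)) := by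
      intro x hx y hy hfst
      rw [Finset.mem_coe] at hx hy
      have hxb := (Finset.mem_filter.mp hx).2
      have hyb := (Finset.mem_filter.mp hy).2
      have : x.2 = y.2 := hfib2 x (hFD hx) y (hFD hy) (by rw [hxb, hyb])
      exact Prod.ext hfst this
    have himg : t ≤ ((D.filter fun q => κ q = b).image Prod.fst).card := by
      rw [Finset.card_image_of_injOn hinj]; exact hcard_ge
    obtain ⟨S, hSsub, hScard⟩ := Finset.exists_subset_card_eq himg
    have hFne : (D.filter fun q => κ q = b).Nonempty := by
      rw [← Finset.card_pos]; omega
    obtain ⟨q₀, hq₀⟩ := hFne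
    refine hK S (Wf q₀) hScard (hWcard q₀ (hFD hq₀)) ?_
    intro x hxS y hyW
    obtain ⟨q, hqF, rfl⟩ := Finset.mem_image.mp (hSsub hxS)
    have hWeq : Wf q = Wf q₀ := hfib q (hFD hqF) q₀ (hFD hq₀)
      (by rw [(Finset.mem_filter.mp hqF).2, (Finset.mem_filter.mp hq₀).2])
    exact hWrow q (hFD hqF) y (by rw [hWeq]; exact hyW)
  have hDbound : D.card ≤ (t-1) * (D.image κ).card :=
    Finset.card_le_mul_card_image (f := κ) D (t-1) hfibcard
  have himgsub : D.image κ ⊆ (Finset.range 3) ×ˢ (B ×ˢ Finset.range (t+1)) := by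
    intro b hb
    obtain ⟨q, hq, rfl⟩ := Finset.mem_image.mp hb
    have hrankle : ∀ w, ((Wf q).filter (· ≤ w)).card < t + 1 := by
      intro w
      have := Finset.card_filter_le (Wf q) (· ≤ w)
      rw [hWcard q hq] at this
      omega
    by_cases h0 : sf q = 0
    · rw [hκ0 q h0]
      refine Finset.mem_product.mpr ⟨by simp, Finset.mem_product.mpr ⟨?_, by simp⟩⟩
      exact hWB q hq (fmin_mem (hWne q hq))
    · by_cases hbq : (birthF q).Nonempty
      · rw [hκ1 q h0 hbq]
        refine Finset.mem_product.mpr ⟨by simp, Finset.mem_product.mpr ⟨?_, ?_⟩⟩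
        · exact hWB q hq ((Finset.mem_filter.mp (fmin_mem hbq)).1)
        · rw [Finset.mem_range]; exact hrankle _
      · rw [hκ2 q h0 hbq]
        have hV := hcase2 q hq h0 hbq
        refine Finset.mem_product.mpr ⟨by simp, Finset.mem_product.mpr ⟨?_, ?_⟩⟩
        · exact (Finset.mem_filter.mp (fmin_mem hV)).1
        · rw [Finset.mem_range]; exact hrankle _
  have himgcard : (D.image κ).card ≤ 3 * (B.card * (t+1)) := by
    calc (D.image κ).card ≤ ((Finset.range 3) ×ˢ (B ×ˢ Finset.range (t+1))).card :=
        Finset.card_le_card himgsub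
      _ = 3 * (B.card * (t+1)) := by
        rw [Finset.card_product, Finset.card_product, Finset.card_range, Finset.card_range]
  have hfinal : (t-1) * (3 * (B.card * (t+1))) ≤ 3 * t * t * B.card := by
    obtain ⟨u, rfl⟩ : ∃ u, t = u + 1 := ⟨t - 1, by omega⟩
    simp only [Nat.add_sub_cancel]
    have h1 : u * (u+2) ≤ (u+1)*(u+1) := by nlinarith
    calc u * (3 * (B.card * (u+1+1))) = 3 * (u*(u+2)) * B.card := by ring
      _ ≤ 3 * ((u+1)*(u+1)) * B.card :=
          Nat.mul_le_mul (Nat.mul_le_mul (le_refl 3) h1) (le_refl _)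
      _ = 3 * (u+1) * (u+1) * B.card := by ring
  calc ((A ×ˢ B).filter fun q => P q.1 q.2).card ≤ (t-1) * A.card + D.card := step1
    _ ≤ (t-1) * A.card + (t-1) * (D.image κ).card := Nat.add_le_add_left hDbound _
    _ ≤ (t-1) * A.card + (t-1) * (3 * (B.card * (t+1))) :=
        Nat.add_le_add_left (Nat.mul_le_mul (le_refl _) himgcard) _
    _ ≤ (t-1) * A.card + 3 * t * t * B.card := Nat.add_le_add_left hfinal _

/-- A list of elements of `Fin n` appears in the natural cyclic order of `Fin n` if
there is some rotation of `Fin n` under which the list is strictly increasing. -/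
def FinCyclicSorted {n : ℕ} (l : List (Fin n)) : Prop :=
  ∃ r : Fin n, (l.map (fun x => x - r)).Chain' (· < ·)

/-- In a cyclically-ordered graph `G` on `Fin n`, two vertices `u` and `v` form a double
cherry if either `uv` is an edge of `G`, or there exist vertices `u₁, u₂, v₁, v₂` such
that `u₁, u, u₂, v₁, v, v₂` appear in this cyclic order and `uv₁`, `uv₂`, `vu₁`, `vu₂`
are all edges of `G`. -/
def CyclicDoubleCherry {n : ℕ} (G : SimpleGraph (Fin n)) (u v : Fin n) : Prop :=
  G.Adj u v ∨ ∃ u₁ u₂ v₁ v₂ : Fin n,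
    FinCyclicSorted [u₁, u, u₂, v₁, v, v₂] ∧
    G.Adj u v₁ ∧ G.Adj u v₂ ∧ G.Adj v u₁ ∧ G.Adj v u₂

/-- adjacency transported to ℕ -/
def adjn (n : ℕ) (G : SimpleGraph (Fin n)) (x y : ℕ) : Prop :=
  ∃ (hx : x < n) (hy : y < n), G.Adj ⟨x, hx⟩ ⟨y, hy⟩

lemma adjn_symm {n : ℕ} {G : SimpleGraph (Fin n)} {x y : ℕ} (h : adjn n G x y) :
    adjn n G y x := by
  obtain ⟨hx, hy, h⟩ := h
  exact ⟨hy, hx, h.symm⟩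

lemma cherry_of {n : ℕ} (G : SimpleGraph (Fin n)) (x y z₁ z₂ y₁ y₂ : ℕ)
    (h1 : z₁ < x) (h2 : x < z₂) (h3 : z₂ < y₁) (h4 : y₁ < y) (h5 : y < y₂)
    (a1 : adjn n G x y₁) (a2 : adjn n G x y₂) (a3 : adjn n G y z₁) (a4 : adjn n G y z₂)
    (hx : x < n) (hy : y < n) :
    CyclicDoubleCherry G ⟨x, hx⟩ ⟨y, hy⟩ := by
  obtain ⟨hx', hy₁, ha1⟩ := a1
  obtain ⟨hx'', hy₂, ha2⟩ := a2
  obtain ⟨hy', hz₁, ha3⟩ := a3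
  obtain ⟨hy'', hz₂, ha4⟩ := a4
  haveI : NeZero n := ⟨by omega⟩
  right
  refine ⟨⟨z₁, by omega⟩, ⟨z₂, by omega⟩, ⟨y₁, by omega⟩, ⟨y₂, by omega⟩, ?_, ?_, ?_, ?_, ?_⟩
  · refine ⟨0, ?_⟩
    simp only [sub_zero, List.map_id']
    simp only [List.Chain', List.isChain_cons_cons, List.isChain_singleton, and_true]
    refine ⟨?_, ?_, ?_, ?_, ?_⟩ <;> exact Fin.mk_lt_mk.mpr (by omega)
  · exact ha1
  · exact ha2
  · exact ha3
  · exact ha4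

set_option maxHeartbeats 1000000 in
theorem crossBound (n t : ℕ) (ht : 1 ≤ t) (G : SimpleGraph (Fin n))
    (hyp : ¬ ∃ S T : Finset (Fin n), Disjoint S T ∧ S.card = t ∧ T.card = t ∧
      ∀ u ∈ S, ∀ v ∈ T, CyclicDoubleCherry G u v)
    (a m b : ℕ) (ham : a ≤ m) (hmb : m ≤ b) :
    (((Finset.range n ×ˢ Finset.range n).filter fun q : ℕ × ℕ =>
        adjn n G q.1 q.2 ∧ a ≤ q.1 ∧ q.1 < m ∧ m ≤ q.2 ∧ q.2 < b)).card
      ≤ (3*t*t+2) * (b - a) := by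
  classical
  set act : ℕ → ℕ → Prop := fun x y =>
    (m ≤ y ∧ y < b) ∧ (∃ z, adjn n G y z ∧ a ≤ z ∧ z < x) ∧
      (∃ z, adjn n G y z ∧ x < z ∧ z < m) with hact
  set P : ℕ → ℕ → Prop := fun x y =>
    (a ≤ x ∧ x < m) ∧ act x y ∧ (∃ z, adjn n G x z ∧ m ≤ z ∧ z < y) ∧
      (∃ z, adjn n G x z ∧ y < z ∧ z < b) with hP
  have hPA : ∀ ⦃x y⦄, P x y → x ∈ Finset.Ico a m := by
    intro x y h
    exact Finset.mem_Ico.mpr h.1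
  have hactB : ∀ ⦃x y⦄, act x y → y ∈ Finset.Ico m b := by
    intro x y h
    exact Finset.mem_Ico.mpr h.1
  have hPact : ∀ ⦃x y⦄, P x y → act x y := fun x y h => h.2.1
  have hconv : ∀ ⦃y x₁ x₂ x₃⦄, x₁ ≤ x₂ → x₂ ≤ x₃ → act x₁ y → act x₃ y → act x₂ y := by
    intro y x₁ x₂ x₃ h12 h23 ha1 ha3
    obtain ⟨hr, ⟨z, hz, hz1, hz2⟩, -⟩ := ha1
    obtain ⟨-, -, ⟨z', hz', hz'1, hz'2⟩⟩ := ha3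
    exact ⟨hr, ⟨z, hz, hz1, by omega⟩, ⟨z', hz', by omega, hz'2⟩⟩
  have hwin : ∀ ⦃x y₁ y y₂⦄, P x y₁ → P x y₂ → y₁ ≤ y → y ≤ y₂ → act x y → P x y := by
    intro x y₁ y y₂ hp1 hp2 h1 h2 ha
    obtain ⟨hr, -, ⟨z, hz, hz1, hz2⟩, -⟩ := hp1
    obtain ⟨-, -, -, ⟨z', hz', hz'1, hz'2⟩⟩ := hp2
    exact ⟨hr, ha, ⟨z, hz, hz1, by omega⟩, ⟨z', hz', by omega, hz'2⟩⟩
  have hK : ∀ S T : Finset ℕ, S.card = t → T.card = t → ¬ ∀ x ∈ S, ∀ y ∈ T, P x y := by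
    intro S T hS hT hall
    apply hyp
    have hTne : T.Nonempty := by rw [← Finset.card_pos]; omega
    have hSne : S.Nonempty := by rw [← Finset.card_pos]; omega
    have hSlt : ∀ x ∈ S, x < n := by
      intro x hx
      obtain ⟨y, hy⟩ := hTne
      obtain ⟨-, -, ⟨z, hz, -⟩, -⟩ := hall x hx y hy
      exact hz.1
    have hTlt : ∀ y ∈ T, y < n := by
      intro y hy
      obtain ⟨x, hx⟩ := hSne
      obtain ⟨-, hact', -, -⟩ := hall x hx y hy
      obtain ⟨-, ⟨z, hz, -⟩, -⟩ := hact'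
      exact hz.1
    have hSm : ∀ x ∈ S, x < m := by
      intro x hx
      obtain ⟨y, hy⟩ := hTne
      exact (hall x hx y hy).1.2
    have hTm : ∀ y ∈ T, m ≤ y := by
      intro y hy
      obtain ⟨x, hx⟩ := hSne
      exact (hall x hx y hy).2.1.1.1
    refine ⟨S.attachFin hSlt, T.attachFin hTlt, ?_, ?_, ?_, ?_⟩
    · rw [Finset.disjoint_left]
      intro u hu hu'
      rw [Finset.mem_attachFin] at hu hu'
      have h1 := hSm u.val hu
      have h2 := hTm u.val hu'
      omega
    · rw [Finset.card_attachFin]; exact hS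
    · rw [Finset.card_attachFin]; exact hT
    · intro u hu v hv
      rw [Finset.mem_attachFin] at hu hv
      obtain ⟨⟨hax, hxm⟩, ⟨⟨hmy, hyb⟩, ⟨z₁, hz₁a, hz₁1, hz₁2⟩, ⟨z₂, hz₂a, hz₂1, hz₂2⟩⟩,
        ⟨y₁, hy₁a, hy₁1, hy₁2⟩, ⟨y₂, hy₂a, hy₂1, hy₂2⟩⟩ := hall u.val hu v.val hv
      have := cherry_of G u.val v.val z₁ z₂ y₁ y₂ hz₁2 hz₂1 (by omega) hy₁2 hy₂1
        hy₁a hy₂a hz₁a hz₂a u.isLt v.isLt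
      exact this
  -- the cross set
  set cross : Finset (ℕ × ℕ) := (Finset.range n ×ˢ Finset.range n).filter fun q : ℕ × ℕ =>
      adjn n G q.1 q.2 ∧ a ≤ q.1 ∧ q.1 < m ∧ m ≤ q.2 ∧ q.2 < b with hcross
  set RN : Finset (ℕ × ℕ) := ((Finset.Ico a m) ×ˢ (Finset.Ico m b)).filter
      (fun q => P q.1 q.2) with hRN
  set bad1 : Finset (ℕ × ℕ) := cross.filter fun q =>
      ¬ ∃ z, adjn n G q.2 z ∧ a ≤ z ∧ z < q.1 with hbad1
  set bad2 : Finset (ℕ × ℕ) := cross.filter fun q =>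
      ¬ ∃ z, adjn n G q.2 z ∧ q.1 < z ∧ z < m with hbad2
  set bad3 : Finset (ℕ × ℕ) := cross.filter fun q =>
      ¬ ∃ z, adjn n G q.1 z ∧ m ≤ z ∧ z < q.2 with hbad3
  set bad4 : Finset (ℕ × ℕ) := cross.filter fun q =>
      ¬ ∃ z, adjn n G q.1 z ∧ q.2 < z ∧ z < b with hbad4
  have hsub : cross ⊆ RN ∪ (bad1 ∪ bad2 ∪ bad3 ∪ bad4) := by
    intro q hq
    obtain ⟨hqr, hadj, h1, h2, h3, h4⟩ := Finset.mem_filter.mp hq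
    have hmem : q ∈ RN ∨ q ∈ bad1 ∨ q ∈ bad2 ∨ q ∈ bad3 ∨ q ∈ bad4 := by
      by_cases e1 : ∃ z, adjn n G q.2 z ∧ a ≤ z ∧ z < q.1
      · by_cases e2 : ∃ z, adjn n G q.2 z ∧ q.1 < z ∧ z < m
        · by_cases e3 : ∃ z, adjn n G q.1 z ∧ m ≤ z ∧ z < q.2
          · by_cases e4 : ∃ z, adjn n G q.1 z ∧ q.2 < z ∧ z < b
            · refine Or.inl (Finset.mem_filter.mpr ⟨?_, ?_⟩)
              · exact Finset.mem_product.mpr ⟨Finset.mem_Ico.mpr ⟨h1, h2⟩,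
                  Finset.mem_Ico.mpr ⟨h3, h4⟩⟩
              · exact ⟨⟨h1, h2⟩, ⟨⟨h3, h4⟩, e1, e2⟩, e3, e4⟩
            · exact Or.inr (Or.inr (Or.inr (Or.inr (Finset.mem_filter.mpr ⟨hq, e4⟩))))
          · exact Or.inr (Or.inr (Or.inr (Or.inl (Finset.mem_filter.mpr ⟨hq, e3⟩))))
        · exact Or.inr (Or.inr (Or.inl (Finset.mem_filter.mpr ⟨hq, e2⟩)))
      · exact Or.inr (Or.inl (Finset.mem_filter.mpr ⟨hq, e1⟩))
    simp only [Finset.mem_union]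
    tauto
  have hcross_mem : ∀ q ∈ cross, adjn n G q.1 q.2 ∧ a ≤ q.1 ∧ q.1 < m ∧ m ≤ q.2 ∧ q.2 < b :=
    fun q hq => (Finset.mem_filter.mp hq).2
  have hb1 : bad1.card ≤ b - m := by
    have : bad1.card ≤ (Finset.Ico m b).card := by
      apply Finset.card_le_card_of_injOn (fun q => q.2)
      · intro q hq
        obtain ⟨hqc, -⟩ := Finset.mem_filter.mp hq
        obtain ⟨-, -, -, -, h3, h4⟩ := Finset.mem_filter.mp hqc
        exact Finset.mem_Ico.mpr ⟨h3, h4⟩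
      · intro q hq q' hq' heq
        rw [Finset.mem_coe] at hq hq'
        have heq : q.2 = q'.2 := by exact heq
        obtain ⟨hqc, hne⟩ := Finset.mem_filter.mp hq
        obtain ⟨hqc', hne'⟩ := Finset.mem_filter.mp hq'
        obtain ⟨hadj, ha1, -, -, -⟩ := hcross_mem q hqc
        obtain ⟨hadj', ha1', -, -, -⟩ := hcross_mem q' hqc'
        have h12 : q.1 = q'.1 := by
          rcases lt_trichotomy q.1 q'.1 with h | h | h
          · exfalso
            exact hne' ⟨q.1, by rw [← heq]; exact adjn_symm hadj, ha1, h⟩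
          · exact h
          · exfalso
            exact hne ⟨q'.1, by rw [heq]; exact adjn_symm hadj', ha1', h⟩
        exact Prod.ext h12 heq
    rwa [Nat.card_Ico] at this
  have hb2 : bad2.card ≤ b - m := by
    have : bad2.card ≤ (Finset.Ico m b).card := by
      apply Finset.card_le_card_of_injOn (fun q => q.2)
      · intro q hq
        obtain ⟨hqc, -⟩ := Finset.mem_filter.mp hq
        obtain ⟨-, -, -, -, h3, h4⟩ := Finset.mem_filter.mp hqc
        exact Finset.mem_Ico.mpr ⟨h3, h4⟩
      · intro q hq q' hq' heq
        rw [Finset.mem_coe] at hq hq'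
        have heq : q.2 = q'.2 := by exact heq
        obtain ⟨hqc, hne⟩ := Finset.mem_filter.mp hq
        obtain ⟨hqc', hne'⟩ := Finset.mem_filter.mp hq'
        obtain ⟨hadj, -, hm1, -, -⟩ := hcross_mem q hqc
        obtain ⟨hadj', -, hm1', -, -⟩ := hcross_mem q' hqc'
        have h12 : q.1 = q'.1 := by
          rcases lt_trichotomy q.1 q'.1 with h | h | h
          · exfalso
            exact hne ⟨q'.1, by rw [heq]; exact adjn_symm hadj', h, hm1'⟩
          · exact h
          · exfalso
            exact hne' ⟨q.1, by rw [← heq]; exact adjn_symm hadj, h, hm1⟩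
        exact Prod.ext h12 heq
    rwa [Nat.card_Ico] at this
  have hb3 : bad3.card ≤ m - a := by
    have : bad3.card ≤ (Finset.Ico a m).card := by
      apply Finset.card_le_card_of_injOn (fun q => q.1)
      · intro q hq
        obtain ⟨hqc, -⟩ := Finset.mem_filter.mp hq
        obtain ⟨-, -, h1, h2, -, -⟩ := Finset.mem_filter.mp hqc
        exact Finset.mem_Ico.mpr ⟨h1, h2⟩
      · intro q hq q' hq' heq
        rw [Finset.mem_coe] at hq hq'
        have heq : q.1 = q'.1 := by exact heq
        obtain ⟨hqc, hne⟩ := Finset.mem_filter.mp hq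
        obtain ⟨hqc', hne'⟩ := Finset.mem_filter.mp hq'
        obtain ⟨hadj, -, -, hm2, -⟩ := hcross_mem q hqc
        obtain ⟨hadj', -, -, hm2', -⟩ := hcross_mem q' hqc'
        have h12 : q.2 = q'.2 := by
          rcases lt_trichotomy q.2 q'.2 with h | h | h
          · exfalso
            exact hne' ⟨q.2, by rw [← heq]; exact hadj, hm2, h⟩
          · exact h
          · exfalso
            exact hne ⟨q'.2, by rw [heq]; exact hadj', hm2', h⟩
        exact Prod.ext heq h12
    rwa [Nat.card_Ico] at this
  have hb4 : bad4.card ≤ m - a := by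
    have : bad4.card ≤ (Finset.Ico a m).card := by
      apply Finset.card_le_card_of_injOn (fun q => q.1)
      · intro q hq
        obtain ⟨hqc, -⟩ := Finset.mem_filter.mp hq
        obtain ⟨-, -, h1, h2, -, -⟩ := Finset.mem_filter.mp hqc
        exact Finset.mem_Ico.mpr ⟨h1, h2⟩
      · intro q hq q' hq' heq
        rw [Finset.mem_coe] at hq hq'
        have heq : q.1 = q'.1 := by exact heq
        obtain ⟨hqc, hne⟩ := Finset.mem_filter.mp hq
        obtain ⟨hqc', hne'⟩ := Finset.mem_filter.mp hq'
        obtain ⟨hadj, -, -, -, hm4⟩ := hcross_mem q hqc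
        obtain ⟨hadj', -, -, -, hm4'⟩ := hcross_mem q' hqc'
        have h12 : q.2 = q'.2 := by
          rcases lt_trichotomy q.2 q'.2 with h | h | h
          · exfalso
            exact hne ⟨q'.2, by rw [heq]; exact hadj', h, hm4'⟩
          · exact h
          · exfalso
            exact hne' ⟨q.2, by rw [← heq]; exact hadj, h, hm4⟩
        exact Prod.ext heq h12
    rwa [Nat.card_Ico] at this
  have hRNcard : RN.card ≤ 3*t*t*(b-a) := by
    have h1 : (t-1) ≤ 3*t*t := by
      refine le_trans (Nat.sub_le t 1) ?_
      calc t = t*1 := (mul_one t).symm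
        _ ≤ t*(3*t) := Nat.mul_le_mul_left t (by omega)
        _ = 3*t*t := by ring
    have e1 : (Finset.Ico a m).card = m - a := Nat.card_Ico _ _
    have e2 : (Finset.Ico m b).card = b - m := Nat.card_Ico _ _
    have hsweep' : RN.card ≤ (t-1) * (Finset.Ico a m).card + 3*t*t*(Finset.Ico m b).card := by
      refine sweep t ht P act (Finset.Ico a m) (Finset.Ico m b) hPA hactB hPact hconv
        hwin hK RN ?_
      intro q
      rw [hRN, Finset.mem_filter, Finset.mem_product]
      constructor
      · rintro ⟨⟨h1, h2⟩, h3⟩; exact ⟨h1, h2, h3⟩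
      · rintro ⟨h1, h2, h3⟩; exact ⟨⟨h1, h2⟩, h3⟩
    calc RN.card ≤ (t-1) * (Finset.Ico a m).card + 3*t*t*(Finset.Ico m b).card := hsweep'
      _ = (t-1)*(m-a) + 3*t*t*(b-m) := by rw [e1, e2]
      _ ≤ 3*t*t*(m-a) + 3*t*t*(b-m) :=
          Nat.add_le_add_right (Nat.mul_le_mul_right _ h1) _
      _ = 3*t*t*((m-a) + (b-m)) := (Nat.mul_add _ _ _).symm
      _ = 3*t*t*(b-a) := by congr 1; omega
  calc cross.card ≤ (RN ∪ (bad1 ∪ bad2 ∪ bad3 ∪ bad4)).card := Finset.card_le_card hsub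
    _ ≤ RN.card + (bad1 ∪ bad2 ∪ bad3 ∪ bad4).card := Finset.card_union_le _ _
    _ ≤ RN.card + (bad1.card + bad2.card + bad3.card + bad4.card) := by
        have u1 := Finset.card_union_le (bad1 ∪ bad2 ∪ bad3) bad4
        have u2 := Finset.card_union_le (bad1 ∪ bad2) bad3
        have u3 := Finset.card_union_le bad1 bad2
        omega
    _ ≤ 3*t*t*(b-a) + ((b-m) + (b-m) + (m-a) + (m-a)) := by
        have := hRNcard; omega
    _ ≤ 3*t*t*(b-a) + 2*(b-a) := by omega
    _ = (3*t*t+2) * (b - a) := by ring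

set_option maxHeartbeats 1000000 in
theorem countBound (n t : ℕ) (ht : 1 ≤ t) (G : SimpleGraph (Fin n))
    (hyp : ¬ ∃ S T : Finset (Fin n), Disjoint S T ∧ S.card = t ∧ T.card = t ∧
      ∀ u ∈ S, ∀ v ∈ T, CyclicDoubleCherry G u v) :
    ∀ k a b : ℕ, b - a ≤ 2^k →
    (((Finset.range n ×ˢ Finset.range n).filter fun q : ℕ × ℕ =>
        adjn n G q.1 q.2 ∧ q.1 < q.2 ∧ a ≤ q.1 ∧ q.2 < b)).card
      ≤ (3*t*t+2) * (b - a) * k := by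
  have hempty : ∀ a b : ℕ, b ≤ a + 1 →
      ((Finset.range n ×ˢ Finset.range n).filter fun q : ℕ × ℕ =>
        adjn n G q.1 q.2 ∧ q.1 < q.2 ∧ a ≤ q.1 ∧ q.2 < b) = ∅ := by
    intro a b hab
    rw [Finset.filter_eq_empty_iff]
    rintro q - ⟨-, h1, h2, h3⟩
    omega
  intro k
  induction k with
  | zero =>
    intro a b hab
    rw [hempty a b (by simp at hab; omega)]
    simp
  | succ k ih =>
    intro a b hab
    by_cases hba : b ≤ a
    · rw [hempty a b (by omega)]; simp
    push_neg at hba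
    set m := min (a + 2^k) b with hm
    have hm1 : m ≤ a + 2^k := min_le_left _ _
    have hmb : m ≤ b := min_le_right _ _
    have ham : a ≤ m := le_min (Nat.le_add_right _ _) (le_of_lt hba)
    have hpow : 2^(k+1) = 2^k + 2^k := by ring
    have hsplit1 : m - a ≤ 2^k := by omega
    have hsplit2 : b - m ≤ 2^k := by
      rcases le_total (a + 2^k) b with h | h
      · have : m = a + 2^k := min_eq_left h
        omega
      · have : m = b := min_eq_right h
        omega
    have hcross := crossBound n t ht G hyp a m b ham hmb
    have ih1 := ih a m hsplit1
    have ih2 := ih m b hsplit2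
    set S1 := ((Finset.range n ×ˢ Finset.range n).filter fun q : ℕ × ℕ =>
        adjn n G q.1 q.2 ∧ q.1 < q.2 ∧ a ≤ q.1 ∧ q.2 < m) with hS1
    set S2 := ((Finset.range n ×ˢ Finset.range n).filter fun q : ℕ × ℕ =>
        adjn n G q.1 q.2 ∧ q.1 < q.2 ∧ m ≤ q.1 ∧ q.2 < b) with hS2
    set SC := ((Finset.range n ×ˢ Finset.range n).filter fun q : ℕ × ℕ =>
        adjn n G q.1 q.2 ∧ a ≤ q.1 ∧ q.1 < m ∧ m ≤ q.2 ∧ q.2 < b) with hSC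
    have hsub : ((Finset.range n ×ˢ Finset.range n).filter fun q : ℕ × ℕ =>
        adjn n G q.1 q.2 ∧ q.1 < q.2 ∧ a ≤ q.1 ∧ q.2 < b) ⊆ S1 ∪ S2 ∪ SC := by
      intro q hq
      obtain ⟨hqr, hadj, hlt, h1, h2⟩ := Finset.mem_filter.mp hq
      simp only [Finset.mem_union]
      by_cases c1 : q.2 < m
      · exact Or.inl (Or.inl (Finset.mem_filter.mpr ⟨hqr, hadj, hlt, h1, c1⟩))
      · by_cases c2 : m ≤ q.1
        · exact Or.inl (Or.inr (Finset.mem_filter.mpr ⟨hqr, hadj, hlt, c2, h2⟩))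
        · push_neg at c1 c2
          exact Or.inr (Finset.mem_filter.mpr ⟨hqr, hadj, h1, c2, c1, h2⟩)
    calc ((Finset.range n ×ˢ Finset.range n).filter fun q : ℕ × ℕ =>
        adjn n G q.1 q.2 ∧ q.1 < q.2 ∧ a ≤ q.1 ∧ q.2 < b).card
        ≤ (S1 ∪ S2 ∪ SC).card := Finset.card_le_card hsub
      _ ≤ (S1 ∪ S2).card + SC.card := Finset.card_union_le _ _
      _ ≤ S1.card + S2.card + SC.card :=
          Nat.add_le_add_right (Finset.card_union_le _ _) _
      _ ≤ (3*t*t+2) * (m - a) * k + (3*t*t+2) * (b - m) * k + (3*t*t+2) * (b - a) := by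
          omega
      _ = (3*t*t+2) * ((m - a) + (b - m)) * k + (3*t*t+2) * (b - a) := by ring
      _ = (3*t*t+2) * (b - a) * k + (3*t*t+2) * (b - a) := by
          have e : (m - a) + (b - m) = b - a := by omega
          rw [e]
      _ = (3*t*t+2) * (b - a) * (k+1) := by ring

lemma edge_card_eq (n : ℕ) (G : SimpleGraph (Fin n)) :
    G.edgeSet.ncard = (((Finset.range n ×ˢ Finset.range n).filter fun q : ℕ × ℕ =>
      adjn n G q.1 q.2 ∧ q.1 < q.2)).card := by
  classical
  rw [Set.ncard_eq_toFinset_card']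
  symm
  refine (Finset.card_bij
    (fun q hq => Sym2.mk
      (⟨q.1, Finset.mem_range.mp (Finset.mem_product.mp (Finset.mem_filter.mp hq).1).1⟩ : Fin n)
       (⟨q.2, Finset.mem_range.mp (Finset.mem_product.mp (Finset.mem_filter.mp hq).1).2⟩ : Fin n))
    ?_ ?_ ?_)
  · intro q hq
    obtain ⟨-, ⟨hx, hy, hadj⟩, -⟩ := Finset.mem_filter.mp hq
    rw [Set.mem_toFinset, SimpleGraph.mem_edgeSet]
    exact hadj
  · intro q hq q' hq' heq
    obtain ⟨-, -, hlt⟩ := Finset.mem_filter.mp hq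
    obtain ⟨-, -, hlt'⟩ := Finset.mem_filter.mp hq'
    rw [Sym2.eq_iff] at heq
    rcases heq with ⟨h1, h2⟩ | ⟨h1, h2⟩
    · have e1 : q.1 = q'.1 := congrArg Fin.val h1
      have e2 : q.2 = q'.2 := congrArg Fin.val h2
      exact Prod.ext e1 e2
    · have e1 : q.1 = q'.2 := congrArg Fin.val h1
      have e2 : q.2 = q'.1 := congrArg Fin.val h2
      exfalso; omega
  · intro e he
    induction e with
    | _ u v =>
      rw [Set.mem_toFinset, SimpleGraph.mem_edgeSet] at he
      rcases lt_or_gt_of_ne he.ne with hlt | hgt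
      · refine ⟨(u.val, v.val), Finset.mem_filter.mpr ⟨Finset.mem_product.mpr
          ⟨Finset.mem_range.mpr u.isLt, Finset.mem_range.mpr v.isLt⟩,
          ⟨u.isLt, v.isLt, he⟩, hlt⟩, rfl⟩
      · refine ⟨(v.val, u.val), Finset.mem_filter.mpr ⟨Finset.mem_product.mpr
          ⟨Finset.mem_range.mpr v.isLt, Finset.mem_range.mpr u.isLt⟩,
          ⟨v.isLt, u.isLt, he.symm⟩, hgt⟩, Sym2.eq_swap⟩

/-- For every `t ≥ 1` there is a constant `C > 0` such that every cyclically-ordered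
graph on `Fin n` without two disjoint `t`-element vertex subsets, every two vertices from
different subsets forming a double cherry, has at most `C·n·log(n+1)` edges. -/
theorem double_cherry_cyclic_ub :
    ∀ t : ℕ, 1 ≤ t → ∃ C : ℝ, 0 < C ∧
      ∀ (n : ℕ) (G : SimpleGraph (Fin n)),
        (¬ ∃ S T : Finset (Fin n), Disjoint S T ∧ S.card = t ∧ T.card = t ∧
            ∀ u ∈ S, ∀ v ∈ T, CyclicDoubleCherry G u v) →
        (G.edgeSet.ncard : ℝ) ≤ C * n * Real.log (n + 1) := by
  intro t ht
  have hlog2 : (0:ℝ) < Real.log 2 := Real.log_pos (by norm_num)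
  refine ⟨((3*t*t+2 : ℕ) : ℝ) * 2 / Real.log 2 + 1, by positivity, ?_⟩
  intro n G hyp
  classical
  set k := Nat.log 2 n + 1 with hk
  have hn2k : n - 0 ≤ 2^k := by
    rw [Nat.sub_zero, hk]
    exact le_of_lt (Nat.lt_pow_succ_log_self (by norm_num) n)
  have hcount := countBound n t ht G hyp k 0 n hn2k
  have hsetseq : ((Finset.range n ×ˢ Finset.range n).filter fun q : ℕ × ℕ =>
      adjn n G q.1 q.2 ∧ q.1 < q.2) =
      ((Finset.range n ×ˢ Finset.range n).filter fun q : ℕ × ℕ =>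
      adjn n G q.1 q.2 ∧ q.1 < q.2 ∧ 0 ≤ q.1 ∧ q.2 < n) := by
    apply Finset.filter_congr
    intro q hq
    obtain ⟨h1, h2⟩ := Finset.mem_product.mp hq
    rw [Finset.mem_range] at h1 h2
    constructor
    · rintro ⟨ha, hb⟩; exact ⟨ha, hb, by omega, h2⟩
    · rintro ⟨ha, hb, -, -⟩; exact ⟨ha, hb⟩
  have hnat : G.edgeSet.ncard ≤ (3*t*t+2) * n * k := by
    rw [edge_card_eq n G, hsetseq]
    simpa using hcount
  rcases Nat.eq_zero_or_pos n with rfl | hn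
  · have h0 : G.edgeSet.ncard = 0 := by simpa using hnat
    rw [h0]
    norm_num
  -- real conversion
  have hkr : (k : ℝ) ≤ 2 * Real.log (n+1) / Real.log 2 := by
    rw [le_div_iff₀ hlog2]
    have h1 : ((2:ℝ))^(Nat.log 2 n) ≤ (n:ℝ) := by
      exact_mod_cast Nat.pow_log_le_self 2 (by omega)
    have h2 : Real.log ((2:ℝ)^(Nat.log 2 n)) ≤ Real.log ((n:ℝ)+1) := by
      apply Real.log_le_log (by positivity)
      have : (n:ℝ) ≤ (n:ℝ) + 1 := by linarith
      linarith
    rw [Real.log_pow] at h2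
    have h3 : Real.log 2 ≤ Real.log ((n:ℝ)+1) := by
      apply Real.log_le_log (by norm_num)
      have : (1:ℝ) ≤ (n:ℝ) := by exact_mod_cast hn
      linarith
    have : (k:ℝ) * Real.log 2 = (Nat.log 2 n : ℝ) * Real.log 2 + Real.log 2 := by
      rw [hk]; push_cast; ring
    rw [this]
    linarith
  have hCn : (0:ℝ) ≤ ((3*t*t+2 : ℕ) : ℝ) * n := by positivity
  have hlogn : (0:ℝ) ≤ Real.log ((n:ℝ)+1) := by
    apply Real.log_nonneg
    have : (0:ℝ) ≤ (n:ℝ) := by positivity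
    linarith
  calc (G.edgeSet.ncard : ℝ) ≤ ((3*t*t+2 : ℕ) : ℝ) * n * k := by exact_mod_cast hnat
    _ = (((3*t*t+2 : ℕ) : ℝ) * n) * k := by ring
    _ ≤ (((3*t*t+2 : ℕ) : ℝ) * n) * (2 * Real.log (n+1) / Real.log 2) :=
        mul_le_mul_of_nonneg_left hkr hCn
    _ = (((3*t*t+2 : ℕ) : ℝ) * 2 / Real.log 2) * n * Real.log (n+1) := by ring
    _ ≤ (((3*t*t+2 : ℕ) : ℝ) * 2 / Real.log 2 + 1) * n * Real.log (n+1) := by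
        apply mul_le_mul_of_nonneg_right ?_ hlogn
        apply mul_le_mul_of_nonneg_right ?_ (by positivity : (0:ℝ) ≤ (n:ℝ))
        linarith
end

section
/- If a finite ordered graph G contains neither H₀ nor H₁ as an ordered subgraph, then G is K_{3,3}-free, i.e., there are no two disjoint 3-element vertex sets A and B such that every vertex of A is adjacent to every vertex of B. -/
/-- An ordered graph `G` contains `H₀` as an ordered subgraph if there are vertices
`a < b < c` with `ab` and `bc` edges of `G`. -/
def ContainsH0 {V : Type*} [LinearOrder V] (G : SimpleGraph V) : Prop :=
  ∃ a b c : V, a < b ∧ b < c ∧ G.Adj a b ∧ G.Adj b c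

/-- An ordered graph `G` contains `H₁` as an ordered subgraph if there are vertices
`a < b < c < d < e` with `ae`, `bd` and `ce` edges of `G`. -/
def ContainsH1 {V : Type*} [LinearOrder V] (G : SimpleGraph V) : Prop :=
  ∃ a b c d e : V, a < b ∧ b < c ∧ c < d ∧ d < e ∧ G.Adj a e ∧ G.Adj b d ∧ G.Adj c e

private lemma three_sorted {V : Type*} [LinearOrder V] (x y z : V)
    (h1 : x ≠ y) (h2 : x ≠ z) (h3 : y ≠ z) :
    ∃ p q r : V, p < q ∧ q < r ∧ (p = x ∨ p = y ∨ p = z) ∧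
      (q = x ∨ q = y ∨ q = z) ∧ (r = x ∨ r = y ∨ r = z) := by
  rcases h1.lt_or_gt with hxy | hyx <;>
    rcases h2.lt_or_gt with hxz | hzx <;>
    rcases h3.lt_or_gt with hyz | hzy
  · exact ⟨x, y, z, hxy, hyz, by tauto, by tauto, by tauto⟩
  · exact ⟨x, z, y, hxz, hzy, by tauto, by tauto, by tauto⟩
  · exact absurd (hzx.trans (hxy.trans hyz)) (lt_irrefl z)
  · exact ⟨z, x, y, hzx, hxy, by tauto, by tauto, by tauto⟩
  · exact ⟨y, x, z, hyx, hxz, by tauto, by tauto, by tauto⟩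
  · exact absurd (hzy.trans (hyx.trans hxz)) (lt_irrefl z)
  · exact ⟨y, z, x, hyz, hzx, by tauto, by tauto, by tauto⟩
  · exact ⟨z, y, x, hzy, hyx, by tauto, by tauto, by tauto⟩

/-- If some `a` in the first side is below some `b` in the second side of a complete
bipartite pair, then H₀-freeness forces the whole first side below the whole second. -/
private lemma separated {V : Type*} [LinearOrder V] (G : SimpleGraph V)
    (h0 : ¬ ContainsH0 G) (Aset Bset : Set V)
    (hadj : ∀ a ∈ Aset, ∀ b ∈ Bset, G.Adj a b)
    (a b : V) (ha : a ∈ Aset) (hb : b ∈ Bset) (hab : a < b) :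
    ∀ a' ∈ Aset, ∀ b' ∈ Bset, a' < b' := by
  have h2 : ∀ a' ∈ Aset, a' < b := by
    intro a' ha'
    rcases lt_trichotomy a' b with h | h | h
    · exact h
    · exact absurd (h ▸ hadj a' ha' b hb) (G.irrefl)
    · exact absurd ⟨a, b, a', hab, h, hadj a ha b hb, (hadj a' ha' b hb).symm⟩ h0
  intro a' ha' b' hb'
  rcases lt_trichotomy a' b' with h | h | h
  · exact h
  · exact absurd (h ▸ hadj a' ha' b' hb') (G.irrefl)
  · exact absurd ⟨b', a', b, h, h2 a' ha', (hadj a' ha' b' hb').symm,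
      hadj a' ha' b hb⟩ h0

/-- If a finite ordered graph contains neither `H₀` nor `H₁` as an ordered subgraph,
then it is `K_{3,3}`-free. -/
theorem H0_H1_free_K33_free {V : Type*} [Fintype V] [LinearOrder V] (G : SimpleGraph V)
    (h0 : ¬ ContainsH0 G) (h1 : ¬ ContainsH1 G) :
    ¬ ∃ A B : Finset V, Disjoint A B ∧ A.card = 3 ∧ B.card = 3 ∧
        ∀ a ∈ A, ∀ b ∈ B, G.Adj a b := by
  rintro ⟨A, B, hdisj, hA, hB, hadj⟩
  obtain ⟨a1, a2, a3, ha12, ha13, ha23, rfl⟩ := Finset.card_eq_three.mp hA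
  obtain ⟨b1, b2, b3, hb12, hb13, hb23, rfl⟩ := Finset.card_eq_three.mp hB
  -- work with sets
  set SA : Set V := {a1, a2, a3} with hSA
  set SB : Set V := {b1, b2, b3} with hSB
  have hadj' : ∀ a ∈ SA, ∀ b ∈ SB, G.Adj a b := by
    intro a ha b hb
    apply hadj <;> simp_all [SA, SB] <;> tauto
  have hne : a1 ≠ b1 := by
    intro h
    exact Finset.disjoint_left.mp hdisj (Finset.mem_insert_self _ _)
      (by rw [h]; exact Finset.mem_insert_self _ _)
  have haSA : a1 ∈ SA := by simp [SA]
  have hbSB : b1 ∈ SB := by simp [SB]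
  rcases hne.lt_or_gt with hlt | hlt
  · -- all of SA below all of SB
    have hsep := separated G h0 SA SB hadj' a1 b1 haSA hbSB hlt
    obtain ⟨p, q, r, hpq, hqr, hp, hq, hr⟩ := three_sorted a1 a2 a3 ha12 ha13 ha23
    obtain ⟨s, t, u, hst, htu, hs, ht, hu⟩ := three_sorted b1 b2 b3 hb12 hb13 hb23
    have hpA : p ∈ SA := by simp [SA]; tauto
    have hqA : q ∈ SA := by simp [SA]; tauto
    have hrA : r ∈ SA := by simp [SA]; tauto
    have htB : t ∈ SB := by simp [SB]; tauto
    have huB : u ∈ SB := by simp [SB]; tauto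
    exact h1 ⟨p, q, r, t, u, hpq, hqr, hsep r hrA t htB, htu,
      hadj' p hpA u huB, hadj' q hqA t htB, hadj' r hrA u huB⟩
  · -- all of SB below all of SA
    have hsep := separated G h0 SB SA (fun b hb a ha => (hadj' a ha b hb).symm)
      b1 a1 hbSB haSA hlt
    obtain ⟨p, q, r, hpq, hqr, hp, hq, hr⟩ := three_sorted b1 b2 b3 hb12 hb13 hb23
    obtain ⟨s, t, u, hst, htu, hs, ht, hu⟩ := three_sorted a1 a2 a3 ha12 ha13 ha23
    have hpB : p ∈ SB := by simp [SB]; tauto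
    have hqB : q ∈ SB := by simp [SB]; tauto
    have hrB : r ∈ SB := by simp [SB]; tauto
    have htA : t ∈ SA := by simp [SA]; tauto
    have huA : u ∈ SA := by simp [SA]; tauto
    exact h1 ⟨p, q, r, t, u, hpq, hqr, hsep r hrB t htA, htu,
      (hadj' u huA p hpB).symm, (hadj' t htA q hqB).symm, (hadj' u huA r hrB).symm⟩
end

section
/- Let n ≥ 1 and let w be a finite sequence over the alphabet Fin n such that: no two consecutive terms of w are equal; w contains no (not necessarily consecutive) five-term subsequence of the form a, b, a, b, a with a ≠ b; and every letter of Fin n occurs at least twice in w. Then there exists a graph on the vertex set Fin (2n), viewed as an ordered graph, that does not contain H₁ as an ordered subgraph and has at least (length of w) − 2n edges. -/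
namespace WalczakAux

variable {n : ℕ}

/-- index of the first occurrence of `a` in `w` (junk value `0` if `a ∉ w`). -/
noncomputable def fst (w : List (Fin n)) (a : Fin n) : ℕ := sInf {i | w[i]? = some a}

/-- index of the last occurrence of `a` in `w` (junk value `0` if `a ∉ w`). -/
noncomputable def lst (w : List (Fin n)) (a : Fin n) : ℕ := sSup {i | w[i]? = some a}

lemma occ_lt {w : List (Fin n)} {i : ℕ} {a : Fin n} (h : w[i]? = some a) : i < w.length := by
  rcases List.getElem?_eq_some_iff.mp h with ⟨h', _⟩; exact h'

lemma occ_bdd (w : List (Fin n)) (a : Fin n) : BddAbove {i : ℕ | w[i]? = some a} := by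
  refine ⟨w.length, ?_⟩
  intro i hi
  have hi' : w[i]? = some a := hi
  exact le_of_lt (occ_lt hi')

lemma fst_le {w : List (Fin n)} {i : ℕ} {a : Fin n} (h : w[i]? = some a) : fst w a ≤ i :=
  Nat.sInf_le h

lemma le_lst {w : List (Fin n)} {i : ℕ} {a : Fin n} (h : w[i]? = some a) : i ≤ lst w a :=
  le_csSup (occ_bdd w a) h

lemma fst_occ {w : List (Fin n)} {i : ℕ} {a : Fin n} (h : w[i]? = some a) :
    w[fst w a]? = some a :=
  Nat.sInf_mem (⟨i, h⟩ : Set.Nonempty {i : ℕ | w[i]? = some a})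

lemma lst_occ {w : List (Fin n)} {i : ℕ} {a : Fin n} (h : w[i]? = some a) :
    w[lst w a]? = some a :=
  Nat.sSup_mem (⟨i, h⟩ : Set.Nonempty {i : ℕ | w[i]? = some a}) (occ_bdd w a)

/-- the finite set of all endpoint (first or last occurrence) indices -/
noncomputable def EP (w : List (Fin n)) : Finset ℕ :=
  (Finset.univ.image (fst w)) ∪ (Finset.univ.image (lst w))

lemma fst_mem_EP (w : List (Fin n)) (a : Fin n) : fst w a ∈ EP w := by
  simp only [EP, Finset.mem_union, Finset.mem_image]
  exact Or.inl ⟨a, Finset.mem_univ a, rfl⟩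

lemma lst_mem_EP (w : List (Fin n)) (a : Fin n) : lst w a ∈ EP w := by
  simp only [EP, Finset.mem_union, Finset.mem_image]
  exact Or.inr ⟨a, Finset.mem_univ a, rfl⟩

lemma EP_card (w : List (Fin n)) : (EP w).card ≤ 2 * n := by
  have h1 := Finset.card_union_le (Finset.univ.image (fst w)) (Finset.univ.image (lst w))
  have h2 := Finset.card_image_le (s := (Finset.univ : Finset (Fin n))) (f := fst w)
  have h3 := Finset.card_image_le (s := (Finset.univ : Finset (Fin n))) (f := lst w)
  have h4 : (Finset.univ : Finset (Fin n)).card = n := by simp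
  rw [h4] at h2 h3
  calc (EP w).card ≤ _ := h1
    _ ≤ 2 * n := by omega

variable (hn : 0 < n)

/-- the letter at position `o` (junk if out of range) -/
noncomputable def letter (w : List (Fin n)) (o : ℕ) : Fin n := (w[o]?).getD ⟨0, hn⟩

lemma letter_occ {w : List (Fin n)} {o : ℕ} (h : o < w.length) :
    w[o]? = some (letter hn w o) := by
  simp [letter, List.getElem?_eq_getElem h]

lemma letter_eq {w : List (Fin n)} {o : ℕ} {a : Fin n} (h : w[o]? = some a) :
    letter hn w o = a := by
  simp [letter, h]

/-- `o` is a strictly middle occurrence of its letter -/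
def Mid (w : List (Fin n)) (o : ℕ) : Prop :=
  o < w.length ∧ fst w (letter hn w o) < o ∧ o < lst w (letter hn w o)

lemma mid_not_mem_EP {w : List (Fin n)} {o : ℕ} (hm : Mid hn w o) : o ∉ EP w := by
  intro ho
  have h1 := hm.2.1
  have h2 := hm.2.2
  simp only [EP, Finset.mem_union, Finset.mem_image] at ho
  rcases ho with ⟨a, -, ha⟩ | ⟨a, -, ha⟩
  · by_cases hne : Set.Nonempty {i : ℕ | w[i]? = some a}
    · have hocc : w[o]? = some a := ha ▸ Nat.sInf_mem hne
      have hl : letter hn w o = a := letter_eq hn hocc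
      rw [hl] at h1
      omega
    · have hz : {i : ℕ | w[i]? = some a} = ∅ := Set.not_nonempty_iff_eq_empty.mp hne
      have h0 : fst w a = 0 := by rw [fst, hz]; exact Nat.sInf_empty
      omega
  · by_cases hne : Set.Nonempty {i : ℕ | w[i]? = some a}
    · have hocc : w[o]? = some a := ha ▸ Nat.sSup_mem hne (occ_bdd w a)
      have hl : letter hn w o = a := letter_eq hn hocc
      rw [hl] at h2
      omega
    · have hz : {i : ℕ | w[i]? = some a} = ∅ := Set.not_nonempty_iff_eq_empty.mp hne
      have h0 : lst w a = 0 := by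
        rw [lst, hz]
        simpa using (csSup_empty : sSup (∅ : Set ℕ) = ⊥)
      omega

/-- the endpoint immediately preceding position `o` -/
noncomputable def prev (w : List (Fin n)) (o : ℕ) : ℕ := sSup {e | e ∈ EP w ∧ e < o}

lemma prev_bdd (w : List (Fin n)) (o : ℕ) : BddAbove {e | e ∈ EP w ∧ e < o} :=
  ⟨o, fun e he => le_of_lt he.2⟩

lemma prev_mem {w : List (Fin n)} {o : ℕ} (hm : Mid hn w o) :
    prev w o ∈ EP w ∧ prev w o < o := by
  have hne : Set.Nonempty {e | e ∈ EP w ∧ e < o} :=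
    ⟨fst w (letter hn w o), fst_mem_EP w _, hm.2.1⟩
  exact Nat.sSup_mem hne (prev_bdd w o)

lemma le_prev {w : List (Fin n)} {e o : ℕ} (he : e ∈ EP w) (hlt : e < o) : e ≤ prev w o :=
  le_csSup (prev_bdd w o) ⟨he, hlt⟩

/-- rank of an index inside `EP w` -/
noncomputable def rank (w : List (Fin n)) (i : ℕ) : ℕ := ((EP w).filter (· < i)).card

lemma rank_lt {w : List (Fin n)} {i : ℕ} (hi : i ∈ EP w) : rank w i < 2 * n := by
  have hsub : (EP w).filter (· < i) ⊂ EP w := by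
    refine Finset.ssubset_iff_of_subset (Finset.filter_subset _ _) |>.mpr ?_
    exact ⟨i, hi, by simp⟩
  exact lt_of_lt_of_le (Finset.card_lt_card hsub) (EP_card w)

/-- the order embedding of endpoints into `Fin (2*n)` -/
noncomputable def iota (w : List (Fin n)) (i : ℕ) : Fin (2 * n) :=
  ⟨rank w i % (2 * n), Nat.mod_lt _ (by omega)⟩

lemma iota_val {w : List (Fin n)} {i : ℕ} (hi : i ∈ EP w) :
    (iota hn w i).val = rank w i := Nat.mod_eq_of_lt (rank_lt hi)

lemma rank_le_rank (w : List (Fin n)) {i j : ℕ} (hij : i ≤ j) : rank w i ≤ rank w j := by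
  apply Finset.card_le_card
  intro e he
  simp only [Finset.mem_filter] at he ⊢
  exact ⟨he.1, lt_of_lt_of_le he.2 hij⟩

lemma rank_lt_rank (w : List (Fin n)) {i j : ℕ} (hi : i ∈ EP w) (hij : i < j) :
    rank w i < rank w j := by
  apply Finset.card_lt_card
  refine Finset.ssubset_iff_of_subset ?_ |>.mpr ⟨i, by simp [hi, hij], by simp⟩
  intro e he
  simp only [Finset.mem_filter] at he ⊢
  exact ⟨he.1, lt_of_lt_of_le he.2 (le_of_lt hij)⟩

lemma iota_lt_iff {w : List (Fin n)} {i j : ℕ} (hi : i ∈ EP w) (hj : j ∈ EP w) :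
    iota hn w i < iota hn w j ↔ i < j := by
  constructor
  · intro h
    by_contra hc
    push_neg at hc
    have := rank_le_rank w hc
    have h2 : (iota hn w j).val ≤ (iota hn w i).val := by
      rw [iota_val hn hi, iota_val hn hj]; exact this
    exact absurd h (not_lt.mpr h2)
  · intro h
    have := rank_lt_rank w hi h
    show (iota hn w i).val < (iota hn w j).val
    rw [iota_val hn hi, iota_val hn hj]; exact this

lemma iota_inj {w : List (Fin n)} {i j : ℕ} (hi : i ∈ EP w) (hj : j ∈ EP w)
    (h : iota hn w i = iota hn w j) : i = j := by
  rcases lt_trichotomy i j with hc | hc | hc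
  · exact absurd h (ne_of_lt ((iota_lt_iff hn hi hj).mpr hc))
  · exact hc
  · exact absurd h.symm (ne_of_lt ((iota_lt_iff hn hj hi).mpr hc))

/-- helper strictly monotone reindexing function -/
def gfun (p₁ p₂ p₃ p₄ p₅ L : ℕ) : ℕ → ℕ
  | 0 => p₁
  | 1 => p₂
  | 2 => p₃
  | 3 => p₄
  | 4 => p₅
  | (k+5) => L + k

lemma five_sublist {w : List (Fin n)} {x y : Fin n} {p₁ p₂ p₃ p₄ p₅ : ℕ}
    (h₁₂ : p₁ < p₂) (h₂₃ : p₂ < p₃) (h₃₄ : p₃ < p₄) (h₄₅ : p₄ < p₅)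
    (o₁ : w[p₁]? = some x) (o₂ : w[p₂]? = some y) (o₃ : w[p₃]? = some x)
    (o₄ : w[p₄]? = some y) (o₅ : w[p₅]? = some x) :
    [x, y, x, y, x].Sublist w := by
  have hlen : p₅ < w.length := occ_lt o₅
  have hg : StrictMono (gfun p₁ p₂ p₃ p₄ p₅ w.length) := by
    apply strictMono_nat_of_lt_succ
    intro i
    match i with
    | 0 => exact h₁₂
    | 1 => exact h₂₃
    | 2 => exact h₃₄
    | 3 => exact h₄₅
    | 4 => show p₅ < w.length + 0; omega
    | (k+5) => show w.length + k < w.length + (k+1); omega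
  apply List.sublist_of_orderEmbedding_getElem?_eq (OrderEmbedding.ofStrictMono _ hg)
  intro ix
  have hcoe : ∀ m : ℕ, (OrderEmbedding.ofStrictMono _ hg) m = gfun p₁ p₂ p₃ p₄ p₅ w.length m :=
    fun m => rfl
  rw [hcoe]
  match ix with
  | 0 => simp [gfun, o₁]
  | 1 => simp [gfun, o₂]
  | 2 => simp [gfun, o₃]
  | 3 => simp [gfun, o₄]
  | 4 => simp [gfun, o₅]
  | (k+5) =>
    show ([x, y, x, y, x][k+5]?) = w[w.length + k]?
    rw [List.getElem?_eq_none (by simp), List.getElem?_eq_none (by omega)]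

lemma adj_ne {w : List (Fin n)} (hcons : w.Chain' (· ≠ ·)) {i : ℕ} {a b : Fin n}
    (h : i + 1 < w.length) (ha : w[i]? = some a) (hb : w[i+1]? = some b) : a ≠ b := by
  have h2 := List.isChain_iff_getElem.mp hcons i (by omega)
  rcases List.getElem?_eq_some_iff.mp ha with ⟨hi, ha'⟩
  rcases List.getElem?_eq_some_iff.mp hb with ⟨hi', hb'⟩
  intro hab
  apply h2
  rw [ha', hb', hab]

/-- Key lemma: two strictly middle occurrences of the same letter have different
preceding endpoints. -/
lemma prev_ne {w : List (Fin n)} (hcons : w.Chain' (· ≠ ·))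
    (hforb : ¬ ∃ a b : Fin n, a ≠ b ∧ [a, b, a, b, a].Sublist w)
    {o o' : ℕ} (hm : Mid hn w o) (hm' : Mid hn w o') (hlt : o < o')
    (hx : letter hn w o = letter hn w o') (hp : prev w o = prev w o') : False := by
  have hox : w[o]? = some (letter hn w o) := letter_occ hn hm.1
  have hox' : w[o']? = some (letter hn w o) := by rw [hx]; exact letter_occ hn hm'.1
  have hprevo := prev_mem hn hm
  -- o + 1 < o'
  have ho1 : o + 1 < o' := by
    rcases Nat.lt_or_ge (o + 1) o' with h | h
    · exact h
    · have heq : o + 1 = o' := by omega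
      have hox'' : w[o+1]? = some (letter hn w o) := by rw [heq]; exact hox'
      exact absurd rfl (adj_ne hcons (heq ▸ hm'.1) hox hox'')
  have ho1len : o + 1 < w.length := lt_trans ho1 hm'.1
  have hcocc : w[o+1]? = some (letter hn w (o+1)) := letter_occ hn ho1len
  set c := letter hn w (o + 1)
  set x := letter hn w o
  have hcx : c ≠ x := (adj_ne hcons ho1len hox hcocc).symm
  -- where is fst c?
  by_cases hfo : o < fst w c
  · -- fst c is an endpoint in (o, o'), contradicting prev o = prev o'
    have h1 : fst w c ≤ o + 1 := fst_le hcocc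
    have h2 : fst w c ≤ prev w o' := le_prev (fst_mem_EP w c) (by omega)
    rw [← hp] at h2
    have := hprevo.2
    omega
  · push_neg at hfo
    have hfne : fst w c ≠ o := by
      intro he
      have hfc := fst_occ hcocc
      rw [he, hox] at hfc
      exact hcx (Option.some.inj hfc).symm
    have hfo' : fst w c < o := lt_of_le_of_ne hfo hfne
    have hlc : o + 1 ≤ lst w c := le_lst hcocc
    by_cases hlo : lst w c < o'
    · have h2 : lst w c ≤ prev w o' := le_prev (lst_mem_EP w c) hlo
      rw [← hp] at h2
      have := hprevo.2
      omega
    · push_neg at hlo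
      have hlne : lst w c ≠ o' := by
        intro he
        have hlcx := lst_occ hcocc
        rw [he, hox'] at hlcx
        exact hcx (Option.some.inj hlcx).symm
      have hlo' : o' < lst w c := lt_of_le_of_ne hlo (Ne.symm hlne)
      exact hforb ⟨c, x, hcx,
        five_sublist hfo' (Nat.lt_succ_self o) ho1 hlo'
          (fst_occ hcocc) hox hcocc hox' (lst_occ hcocc)⟩

/-- the edge relation: each strictly middle occurrence `o` of a letter `x` connects
the endpoint just before `o` with the last occurrence of `x`. -/
def R (w : List (Fin n)) (u v : Fin (2 * n)) : Prop :=
  ∃ o : ℕ, Mid hn w o ∧ u = iota hn w (prev w o) ∧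
    v = iota hn w (lst w (letter hn w o))

/-- the graph of the construction -/
def G (w : List (Fin n)) : SimpleGraph (Fin (2 * n)) := SimpleGraph.fromRel (R hn w)

lemma R_lt {w : List (Fin n)} {u v : Fin (2 * n)} (h : R hn w u v) : u < v := by
  obtain ⟨o, hm, hu, hv⟩ := h
  have h1 := prev_mem hn hm
  rw [hu, hv]
  exact (iota_lt_iff hn h1.1 (lst_mem_EP w _)).mpr (by have := hm.2.2; omega)

lemma not_containsH1 {w : List (Fin n)} (hcons : w.Chain' (· ≠ ·))
    (hforb : ¬ ∃ a b : Fin n, a ≠ b ∧ [a, b, a, b, a].Sublist w) :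
    ¬ ContainsH1 (G hn w) := by
  rintro ⟨q1, q2, q3, q4, q5, h12, h23, h34, h45, e15, e24, e35⟩
  have getR : ∀ {u v : Fin (2 * n)}, (G hn w).Adj u v → u < v → R hn w u v := by
    intro u v huv hlt
    rcases huv.2 with h | h
    · exact h
    · exact absurd (R_lt hn h) (not_lt.mpr (le_of_lt hlt))
  obtain ⟨o₁, hm₁, hq1, hq5⟩ := getR e15 (lt_trans (lt_trans (lt_trans h12 h23) h34) h45)
  obtain ⟨oy, hmy, hq2, hq4⟩ := getR e24 (lt_trans h23 h34)
  obtain ⟨o₂, hm₂, hq3, hq5'⟩ := getR e35 (lt_trans h34 h45)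
  set x₁ := letter hn w o₁ with hx₁
  set x₂ := letter hn w o₂ with hx₂
  set y := letter hn w oy with hy
  have ho₁ : w[o₁]? = some x₁ := letter_occ hn hm₁.1
  have ho₂ : w[o₂]? = some x₂ := letter_occ hn hm₂.1
  have hoy : w[oy]? = some y := letter_occ hn hmy.1
  -- the two edges into q5 come from the same letter
  have hlsteq : lst w x₁ = lst w x₂ :=
    iota_inj hn (lst_mem_EP w x₁) (lst_mem_EP w x₂) (by rw [← hq5, ← hq5'])
  have hxeq : x₁ = x₂ := by
    have h1 : w[lst w x₁]? = some x₁ := lst_occ ho₁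
    have h2 : w[lst w x₂]? = some x₂ := lst_occ ho₂
    rw [hlsteq, h2] at h1
    exact (Option.some.inj h1).symm
  -- translate vertex inequalities into position inequalities
  have hpm₁ := prev_mem hn hm₁
  have hpm₂ := prev_mem hn hm₂
  have hpmy := prev_mem hn hmy
  have hp12 : prev w o₁ < prev w oy :=
    (iota_lt_iff hn hpm₁.1 hpmy.1).mp (by rw [← hq1, ← hq2]; exact h12)
  have hp23 : prev w oy < prev w o₂ :=
    (iota_lt_iff hn hpmy.1 hpm₂.1).mp (by rw [← hq2, ← hq3]; exact h23)
  have hp34 : prev w o₂ < lst w y :=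
    (iota_lt_iff hn hpm₂.1 (lst_mem_EP w y)).mp (by rw [← hq3, ← hq4]; exact h34)
  have hp45 : lst w y < lst w x₁ :=
    (iota_lt_iff hn (lst_mem_EP w y) (lst_mem_EP w x₁)).mp (by rw [← hq4, ← hq5]; exact h45)
  -- o₁ < oy
  have h1y : o₁ < oy := by
    by_contra hc
    push_neg at hc
    rcases lt_or_eq_of_le hc with hlt | heq
    · have : prev w oy ≤ prev w o₁ := le_prev hpmy.1 (lt_of_lt_of_le hpmy.2 hc)
      omega
    · -- oy = o₁ : then prev equal, contradiction with hp12
      rw [heq] at hp12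
      exact lt_irrefl _ hp12
  -- oy < o₂
  have hy2 : oy < o₂ := by
    by_contra hc
    push_neg at hc
    rcases lt_or_eq_of_le hc with hlt | heq
    · have : prev w o₂ ≤ prev w oy := le_prev hpm₂.1 (lt_of_lt_of_le hpm₂.2 hc)
      omega
    · rw [heq] at hp23
      exact lt_irrefl _ hp23
  -- o₂ < lst y
  have h2l : o₂ < lst w y := by
    by_contra hc
    push_neg at hc
    rcases lt_or_eq_of_le hc with hlt | heq
    · have : lst w y ≤ prev w o₂ := le_prev (lst_mem_EP w y) hlt
      omega
    · exact (mid_not_mem_EP hn hm₂) (heq ▸ lst_mem_EP w y)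
  -- letters differ
  have hxy : x₁ ≠ y := by
    intro he
    rw [he] at hp45
    exact lt_irrefl _ hp45
  -- occurrence of x₁ at o₂
  have ho₂' : w[o₂]? = some x₁ := by rw [ho₂, hxeq]
  -- lst y < lst x₁ gives last occurrences; assemble the pattern x₁ y x₁ y x₁
  have hlyo : w[lst w y]? = some y := lst_occ hoy
  have hlxo : w[lst w x₁]? = some x₁ := lst_occ ho₁
  exact hforb ⟨x₁, y, hxy, five_sublist h1y hy2 h2l hp45 ho₁ hoy ho₂' hlyo hlxo⟩

end WalczakAux

open WalczakAux in
/-- From a Davenport–Schinzel-type sequence `w` over the alphabet `Fin n` — no two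
consecutive equal terms, no five-term subsequence `a, b, a, b, a` with `a ≠ b`, and every
letter occurring at least twice — one obtains an ordered graph on `Fin (2n)` avoiding
`H₁` as an ordered subgraph with at least `|w| − 2n` edges. -/
theorem walczak_construction (n : ℕ) (hn : 1 ≤ n) (w : List (Fin n))
    (hcons : w.Chain' (· ≠ ·))
    (hforbidden : ¬ ∃ a b : Fin n, a ≠ b ∧ [a, b, a, b, a].Sublist w)
    (htwice : ∀ a : Fin n, 2 ≤ w.count a) :
    ∃ G : SimpleGraph (Fin (2 * n)), ¬ ContainsH1 G ∧
      (w.length : ℤ) - 2 * n ≤ (G.edgeSet.ncard : ℤ) := by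
  classical
  have hn0 : 0 < n := hn
  refine ⟨G hn0 w, not_containsH1 hn0 hcons hforbidden, ?_⟩
  set M : Finset ℕ := (Finset.range w.length).filter (fun i => Mid hn0 w i) with hMdef
  set f : ℕ → Sym2 (Fin (2 * n)) :=
    fun o => s(iota hn0 w (prev w o), iota hn0 w (lst w (letter hn0 w o))) with hfdef
  -- injectivity of the edge map on middles
  have hinj : Set.InjOn f ↑M := by
    intro o ho o' ho' hfe
    simp only [hMdef, Finset.coe_filter, Set.mem_setOf_eq, Finset.mem_range] at ho ho'
    have hm : Mid hn0 w o := ho.2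
    have hm' : Mid hn0 w o' := ho'.2
    have hpm := prev_mem hn0 hm
    have hpm' := prev_mem hn0 hm'
    simp only [hfdef, Sym2.eq_iff] at hfe
    rcases hfe with ⟨h1, h2⟩ | ⟨h1, h2⟩
    · -- aligned
      have hprev : prev w o = prev w o' := iota_inj hn0 hpm.1 hpm'.1 h1
      have hlst : lst w (letter hn0 w o) = lst w (letter hn0 w o') :=
        iota_inj hn0 (lst_mem_EP w _) (lst_mem_EP w _) h2
      have hlet : letter hn0 w o = letter hn0 w o' := by
        have ha : w[lst w (letter hn0 w o)]? = some (letter hn0 w o) :=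
          lst_occ (letter_occ hn0 hm.1)
        have hb : w[lst w (letter hn0 w o')]? = some (letter hn0 w o') :=
          lst_occ (letter_occ hn0 hm'.1)
        rw [hlst, hb] at ha
        exact (Option.some.inj ha).symm
      rcases lt_trichotomy o o' with hc | hc | hc
      · exact absurd (prev_ne hn0 hcons hforbidden hm hm' hc hlet hprev) (fun h => h)
      · exact hc
      · exact absurd (prev_ne hn0 hcons hforbidden hm' hm hc hlet.symm hprev.symm)
          (fun h => h)
    · -- crosswise: impossible
      have ha : prev w o = lst w (letter hn0 w o') :=
        iota_inj hn0 hpm.1 (lst_mem_EP w _) h1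
      have hb : lst w (letter hn0 w o) = prev w o' :=
        iota_inj hn0 (lst_mem_EP w _) hpm'.1 h2
      have c1 : prev w o < o := hpm.2
      have c2 : o < lst w (letter hn0 w o) := hm.2.2
      have c3 : prev w o' < o' := hpm'.2
      have c4 : o' < lst w (letter hn0 w o') := hm'.2.2
      omega
  -- edges of the image are real edges
  have himg : ∀ o ∈ M, f o ∈ (G hn0 w).edgeSet := by
    intro o ho
    simp only [hMdef, Finset.mem_filter, Finset.mem_range] at ho
    have hm : Mid hn0 w o := ho.2
    have hpm := prev_mem hn0 hm
    rw [hfdef]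
    rw [SimpleGraph.mem_edgeSet]
    show (SimpleGraph.fromRel (R hn0 w)).Adj _ _
    rw [SimpleGraph.fromRel_adj]
    constructor
    · have : iota hn0 w (prev w o) < iota hn0 w (lst w (letter hn0 w o)) :=
        (iota_lt_iff hn0 hpm.1 (lst_mem_EP w _)).mpr (by have := hm.2.2; omega)
      exact ne_of_lt this
    · exact Or.inl ⟨o, hm, rfl, rfl⟩
  -- cardinality chain
  have hcard1 : M.card ≤ (G hn0 w).edgeSet.ncard := by
    have h1 : (M.image f).card = M.card := Finset.card_image_of_injOn hinj
    have h2 : ((M.image f : Finset (Sym2 (Fin (2 * n)))) : Set (Sym2 (Fin (2 * n)))) ⊆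
        (G hn0 w).edgeSet := by
      intro e he
      simp only [Finset.coe_image, Set.mem_image, Finset.mem_coe] at he
      obtain ⟨o, ho, rfl⟩ := he
      exact himg o ho
    calc M.card = (M.image f).card := h1.symm
      _ = ((M.image f : Finset (Sym2 (Fin (2 * n)))) : Set (Sym2 (Fin (2 * n)))).ncard := by
          rw [Set.ncard_coe_finset]
      _ ≤ (G hn0 w).edgeSet.ncard := Set.ncard_le_ncard h2 (Set.toFinite _)
  -- non-middles are endpoints
  have hcard2 : w.length ≤ M.card + 2 * n := by
    have hunion : Finset.range w.length ⊆ M ∪ EP w := by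
      intro i hi
      have hilen : i < w.length := Finset.mem_range.mp hi
      by_cases hm : Mid hn0 w i
      · exact Finset.mem_union.mpr (Or.inl (Finset.mem_filter.mpr ⟨hi, hm⟩))
      · refine Finset.mem_union.mpr (Or.inr ?_)
        have hia : w[i]? = some (letter hn0 w i) := letter_occ hn0 hilen
        have h1 : fst w (letter hn0 w i) ≤ i := fst_le hia
        have h2 : i ≤ lst w (letter hn0 w i) := le_lst hia
        by_cases hf : fst w (letter hn0 w i) = i
        · exact hf ▸ fst_mem_EP w _
        · by_cases hl : lst w (letter hn0 w i) = i
          · exact hl ▸ lst_mem_EP w _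
          · exact absurd ⟨hilen, lt_of_le_of_ne h1 hf, lt_of_le_of_ne h2 (Ne.symm hl)⟩ hm
    have hEP := EP_card w
    calc w.length = (Finset.range w.length).card := (Finset.card_range _).symm
      _ ≤ (M ∪ EP w).card := Finset.card_le_card hunion
      _ ≤ M.card + (EP w).card := Finset.card_union_le _ _
      _ ≤ M.card + 2 * n := by omega
  have hfinal : w.length ≤ (G hn0 w).edgeSet.ncard + 2 * n := by omega
  have := Int.ofNat_le.mpr hfinal
  push_cast at this ⊢
  omega
end

section
/- Let S ⊆ ℝ² be star-shaped with respect to a point p ∈ S, i.e., for every x ∈ S the closed segment [p,x] is contained in S. Let a, q, d ∈ ℝ² with a ≠ d be points such that the segments [a,q] and [q,d] are contained in S, and suppose that p and q lie strictly on opposite sides of the line through a and d. Then the segment [a,d] is contained in S. -/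
/-- The planar cross product (signed area determinant) of two vectors in `ℝ²`. -/
def det2 (u v : ℝ × ℝ) : ℝ := u.1 * v.2 - u.2 * v.1

/-- If `x` is a convex combination of `a`, `p`, `q` where `[a,q] ⊆ S` and `S` is
star-shaped w.r.t. `p ∈ S`, then `x ∈ S`. -/
lemma star_aux (S : Set (ℝ × ℝ)) (p : ℝ × ℝ) (hp : p ∈ S)
    (hstar : ∀ x ∈ S, segment ℝ p x ⊆ S)
    (a q : ℝ × ℝ) (haq : segment ℝ a q ⊆ S)
    (β γ : ℝ) (hβ : 0 ≤ β) (hγ : 0 ≤ γ) (hs : β + γ ≤ 1) :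
    (1 - β - γ) • a + β • p + γ • q ∈ S := by
  have h1 : 0 ≤ 1 - β := by linarith
  rcases h1.eq_or_lt with h | h
  · have hβ1 : β = 1 := by linarith
    have hγ0 : γ = 0 := by linarith
    simp [hβ1, hγ0]
    exact hp
  · set c : ℝ := 1 - β with hc
    have hcne : c ≠ 0 := ne_of_gt h
    set y : ℝ × ℝ := ((1 - β - γ) / c) • a + (γ / c) • q with hy
    have hymem : y ∈ segment ℝ a q := by
      refine ⟨(1 - β - γ) / c, γ / c, div_nonneg (by linarith) h.le,
        div_nonneg hγ h.le, ?_, rfl⟩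
      field_simp
      linarith [hc]
    have hxmem : (1 - β - γ) • a + β • p + γ • q ∈ segment ℝ p y := by
      refine ⟨β, c, hβ, h.le, by ring, ?_⟩
      rw [hy, smul_add, smul_smul, smul_smul, mul_div_cancel₀ _ hcne,
        mul_div_cancel₀ _ hcne]
      abel
    exact hstar y (haq hymem) hxmem

/-- One side of the crossing argument: if the point `(1-t)•a + t•d` lies on the
`a`-side of where segment `[p,q]` crosses the line `ad`, then it is in `S`. -/
lemma star_side (S : Set (ℝ × ℝ)) (p : ℝ × ℝ) (hp : p ∈ S)
    (hstar : ∀ x ∈ S, segment ℝ p x ⊆ S)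
    (a q d : ℝ × ℝ) (haq : segment ℝ a q ⊆ S)
    (t : ℝ) (ht0 : 0 < t)
    (hAP : det2 (q - a) (d - a) * det2 (p - a) (d - a) < 0)
    (hcond : t * (det2 (p - a) (d - a) - det2 (q - a) (d - a)) ^ 2 ≤
      det2 (p - a) (q - a) * (det2 (p - a) (d - a) - det2 (q - a) (d - a))) :
    (1 - t) • a + t • d ∈ S := by
  set A : ℝ := det2 (q - a) (d - a) with hA
  set P : ℝ := det2 (p - a) (d - a) with hP
  set D : ℝ := det2 (p - a) (q - a) with hD
  have hPAne : P - A ≠ 0 := by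
    intro h
    have : P = A := by linarith
    rw [this] at hAP; nlinarith
  have hPA2 : 0 < (P - A) ^ 2 :=
    lt_of_le_of_ne (sq_nonneg _) (Ne.symm (pow_ne_zero 2 hPAne))
  have hDpos : 0 < D * (P - A) := lt_of_lt_of_le (mul_pos ht0 hPA2) hcond
  have hDne : D ≠ 0 := by
    intro h
    rw [h, zero_mul] at hDpos
    exact lt_irrefl 0 hDpos
  have hA1 : A * (P - A) < 0 := by nlinarith [sq_nonneg A]
  have hP1 : 0 < P * (P - A) := by nlinarith [sq_nonneg P]
  have hAD : 0 ≤ -(A * D) := by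
    nlinarith [mul_neg_of_neg_of_pos hA1 hDpos, hPA2]
  have hPD : 0 ≤ P * D := by
    nlinarith [mul_pos hP1 hDpos, hPA2]
  set β : ℝ := t * (-A) / D with hβdef
  set γ : ℝ := t * P / D with hγdef
  have hβ : 0 ≤ β := by
    have : β = t * (-(A * D)) / D ^ 2 := by
      rw [hβdef]; field_simp
    rw [this]
    exact div_nonneg (mul_nonneg ht0.le hAD) (sq_nonneg D)
  have hγ : 0 ≤ γ := by
    have : γ = t * (P * D) / D ^ 2 := by
      rw [hγdef]; field_simp
    rw [this]
    exact div_nonneg (mul_nonneg ht0.le hPD) (sq_nonneg D)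
  have hsum : β + γ ≤ 1 := by
    have hrep : β + γ = t * ((P - A) * D) / D ^ 2 := by
      rw [hβdef, hγdef]; field_simp; ring
    rw [hrep, div_le_one (by positivity)]
    nlinarith [mul_le_mul_of_nonneg_right hcond hDpos.le, hPA2]
  have c1 : D * (d.1 - a.1) = P * (q.1 - a.1) - A * (p.1 - a.1) := by
    rw [hA, hP, hD]
    simp only [det2, Prod.fst_sub, Prod.snd_sub]
    ring
  have c2 : D * (d.2 - a.2) = P * (q.2 - a.2) - A * (p.2 - a.2) := by
    rw [hA, hP, hD]
    simp only [det2, Prod.fst_sub, Prod.snd_sub]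
    ring
  have key : (1 - t) • a + t • d = (1 - β - γ) • a + β • p + γ • q := by
    have k1 : (1 - t) * a.1 + t * d.1
        = (1 - β - γ) * a.1 + β * p.1 + γ * q.1 := by
      rw [hβdef, hγdef]
      field_simp
      linear_combination t * c1
    have k2 : (1 - t) * a.2 + t * d.2
        = (1 - β - γ) * a.2 + β * p.2 + γ * q.2 := by
      rw [hβdef, hγdef]
      field_simp
      linear_combination t * c2
    refine Prod.ext ?_ ?_ <;>
      simpa only [Prod.fst_add, Prod.snd_add, Prod.smul_fst, Prod.smul_snd,
        smul_eq_mul] using (by first | exact k1 | exact k2)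
  rw [key]
  exact star_aux S p hp hstar a q haq β γ hβ hγ hsum

/-- Let `S ⊆ ℝ²` be star-shaped with respect to `p ∈ S`. If the segments `[a,q]` and
`[q,d]` are contained in `S` (with `a ≠ d`) and `p` and `q` lie strictly on opposite
sides of the line through `a` and `d`, then the segment `[a,d]` is contained in `S`. -/
theorem star_shaped_segment (S : Set (ℝ × ℝ)) (p : ℝ × ℝ) (hp : p ∈ S)
    (hstar : ∀ x ∈ S, segment ℝ p x ⊆ S)
    (a q d : ℝ × ℝ) (had : a ≠ d)
    (haq : segment ℝ a q ⊆ S) (hqd : segment ℝ q d ⊆ S)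
    (hsides : det2 (q - a) (d - a) * det2 (p - a) (d - a) < 0) :
    segment ℝ a d ⊆ S := by
  intro x hx
  rw [segment_eq_image] at hx
  obtain ⟨t, ⟨ht0, ht1⟩, rfl⟩ := hx
  show (1 - t) • a + t • d ∈ S
  rcases eq_or_lt_of_le ht0 with h0 | h0
  · have : (1 - t) • a + t • d = a := by rw [← h0]; simp
    rw [this]
    exact haq (left_mem_segment ℝ a q)
  rcases eq_or_lt_of_le ht1 with h1 | h1
  · have : (1 - t) • a + t • d = d := by rw [h1]; simp
    rw [this]
    exact hqd (right_mem_segment ℝ q d)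
  rcases le_or_gt
      (t * (det2 (p - a) (d - a) - det2 (q - a) (d - a)) ^ 2)
      (det2 (p - a) (q - a) * (det2 (p - a) (d - a) - det2 (q - a) (d - a)))
      with hc | hc
  · exact star_side S p hp hstar a q d haq t h0 hsides hc
  · have hAP2 : det2 (q - d) (a - d) * det2 (p - d) (a - d) < 0 := by
      have e : det2 (q - d) (a - d) * det2 (p - d) (a - d)
          = det2 (q - a) (d - a) * det2 (p - a) (d - a) := by
        simp only [det2, Prod.fst_sub, Prod.snd_sub]; ring
      rw [e]; exact hsides
    have hcond2 : (1 - t) * (det2 (p - d) (a - d) - det2 (q - d) (a - d)) ^ 2 ≤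
        det2 (p - d) (q - d) * (det2 (p - d) (a - d) - det2 (q - d) (a - d)) := by
      have e1 : det2 (p - d) (a - d) = -det2 (p - a) (d - a) := by
        simp only [det2, Prod.fst_sub, Prod.snd_sub]; ring
      have e2 : det2 (q - d) (a - d) = -det2 (q - a) (d - a) := by
        simp only [det2, Prod.fst_sub, Prod.snd_sub]; ring
      have e3 : det2 (p - d) (q - d)
          = det2 (p - a) (q - a) - det2 (p - a) (d - a) + det2 (q - a) (d - a) := by
        simp only [det2, Prod.fst_sub, Prod.snd_sub]; ring
      rw [e1, e2, e3]
      nlinarith [hc]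
    have hmem := star_side S p hp hstar d q a
      (by rw [segment_symm]; exact hqd) (1 - t) (by linarith) hAP2 hcond2
    have h2 : (1 - (1 - t)) • d + (1 - t) • a = (1 - t) • a + t • d := by
      have ht : 1 - (1 - t) = t := by ring
      rw [ht]; exact add_comm _ _
    rwa [h2] at hmem
end
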